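/- arXiv:2204.11438 — 11 statements merged into one kernel-verified Lean document; each statement's English description precedes it below -/
import Mathlib

section
/- If (X_1, ..., X_n) is an n-dimensional random vector with finite variances such that Cov(X_i, X_j) ≤ 0 for all i ≠ j (NCD), and X_1 + ... + X_n is almost surely constant (joint mix), then 2·max_i Var(X_i) ≤ ∑_i Var(X_i). -/
open MeasureTheory ProbabilityTheory

noncomputable def cov {Ω : Type*} [MeasurableSpace Ω] (P : Measure Ω) (X Y : Ω → ℝ) : ℝ :=
  ∫ ω, (X ω - ∫ x, X x ∂P) * (Y ω - ∫ x, Y x ∂P) ∂P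

/-!
On a joint mix `X i = c - ∑_{j ≠ i} X j` almost surely, so `Var X_i` is the variance of the sum
of the other components. Expanding that variance, the off-diagonal covariances are `≤ 0`, hence
`Var X_i ≤ ∑_{j ≠ i} Var X_j`; adding `Var X_i` to both sides gives the claim.
-/

lemma cov_eq_covariance {Ω : Type*} [MeasurableSpace Ω] (P : Measure Ω) (X Y : Ω → ℝ) :
    cov P X Y = covariance X Y P :=
  rfl

namespace ProbabilityTheory

variable {Ω ι : Type*} [MeasurableSpace Ω] {μ : Measure Ω} {X : ι → Ω → ℝ}

lemma variance_sum_le_sum_variance_of_covariance_nonpos [IsFiniteMeasure μ] {s : Finset ι}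
    (hX : ∀ i ∈ s, MemLp (X i) 2 μ)
    (hcov : ∀ i ∈ s, ∀ j ∈ s, i ≠ j → covariance (X i) (X j) μ ≤ 0) :
    Var[∑ i ∈ s, X i; μ] ≤ ∑ i ∈ s, Var[X i; μ] := by
  classical
  rw [variance_sum' hX]
  refine Finset.sum_le_sum fun i hi => ?_
  rw [← Finset.add_sum_erase s _ hi, covariance_self (hX i hi).aemeasurable]
  have hoff : ∑ j ∈ s.erase i, covariance (X i) (X j) μ ≤ 0 :=
    Finset.sum_nonpos fun j hj => hcov i hi j (Finset.mem_of_mem_erase hj)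
      (Finset.ne_of_mem_erase hj).symm
  linarith

lemma variance_eq_variance_sum_erase_of_sum_ae_eq_const [IsProbabilityMeasure μ] [Fintype ι]
    [DecidableEq ι] (hX : ∀ i, AEStronglyMeasurable (X i) μ) {c : ℝ}
    (hc : ∀ᵐ ω ∂μ, ∑ i, X i ω = c) (i : ι) :
    Var[X i; μ] = Var[∑ j ∈ Finset.univ.erase i, X j; μ] := by
  have hXi : X i =ᵐ[μ] fun ω => c - (∑ j ∈ Finset.univ.erase i, X j) ω := by
    filter_upwards [hc] with ω hω
    rw [← hω, ← Finset.add_sum_erase _ _ (Finset.mem_univ i), Finset.sum_apply]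
    ring
  rw [variance_congr hXi,
    variance_const_sub (Finset.aestronglyMeasurable_sum _ fun j _ => hX j)]

end ProbabilityTheory

theorem stmt0_general {Ω : Type*} [MeasurableSpace Ω] (P : Measure Ω) [IsProbabilityMeasure P]
    {n : ℕ} (X : Fin n → Ω → ℝ)
    (hL2 : ∀ i, MemLp (X i) 2 P)
    (hNCD : ∀ i j, i ≠ j → cov P (X i) (X j) ≤ 0)
    (hJM : ∃ c : ℝ, ∀ᵐ ω ∂P, ∑ i, X i ω = c) :
    ∀ i, 2 * variance (X i) P ≤ ∑ j, variance (X j) P := by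
  intro i
  obtain ⟨c, hc⟩ := hJM
  have hle : Var[X i; P] ≤ ∑ j ∈ Finset.univ.erase i, Var[X j; P] := by
    rw [variance_eq_variance_sum_erase_of_sum_ae_eq_const (fun j => (hL2 j).1) hc i]
    exact variance_sum_le_sum_variance_of_covariance_nonpos (fun j _ => hL2 j)
      fun j _ k _ hjk => cov_eq_covariance P (X j) (X k) ▸ hNCD j k hjk
  rw [← Finset.add_sum_erase _ _ (Finset.mem_univ i)]
  linarith

/-- An NCD joint mix with finite variances satisfies `2 max_i Var(X_i) ≤ ∑_i Var(X_i)`. -/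
theorem stmt0 {Ω : Type*} [MeasurableSpace Ω] (P : Measure Ω) [IsProbabilityMeasure P]
    {n : ℕ} (X : Fin n → Ω → ℝ) (hmeas : ∀ i, Measurable (X i))
    (hL2 : ∀ i, MemLp (X i) 2 P)
    (hNCD : ∀ i j, i ≠ j → cov P (X i) (X j) ≤ 0)
    (hJM : ∃ c : ℝ, ∀ᵐ ω ∂P, ∑ i, X i ω = c) :
    ∀ i, 2 * variance (X i) P ≤ ∑ j, variance (X j) P :=
  stmt0_general P X hL2 hNCD hJM
end

section
/- Let σ_1,...,σ_n ≥ 0 satisfy 2·max_i σ_i² ≤ ∑_i σ_i². Then there exists an n-dimensional Gaussian random vector (X_1,...,X_n) with Var(X_i) = σ_i² for each i, Cov(X_i,X_j) ≤ 0 for all i ≠ j, and X_1 + ... + X_n = 0 almost surely (equivalently, a positive semi-definite matrix Σ with diagonal entries σ_1²,...,σ_n², nonpositive off-diagonal entries, and 1ᵀΣ1 = 0). -/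
/-!
Lay intervals `I_k = [a_k, a_{k+1}]` of lengths `σ_k²` end to end on `[0, s]`, `s = ∑ σ_k²`, and
let `B_{kl}` be the length of the overlap of `I_k` with `I_l` shifted by `s/2` or by `-s/2`.
The shifted copies of the `I_l` tile `[-s/2, 3s/2] ⊇ [0, s]`, so the `k`-th row of `B` sums to
`σ_k²`; `B` is symmetric, and its diagonal vanishes because no interval is longer than `s/2`.
The weighted Laplacian `diag(B 1) - B`, whose quadratic form is `½ ∑ B_{ij} (x_i - x_j)²`, is then
the required matrix.
-/

open Finset Matrix

namespace Matrix

variable {ι R : Type*} [Fintype ι] [DecidableEq ι]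

def weightedLaplacian [AddCommGroup R] (B : Matrix ι ι R) : Matrix ι ι R :=
  diagonal (fun i => ∑ j, B i j) - B

section AddCommGroup

variable [AddCommGroup R] (B : Matrix ι ι R)

lemma weightedLaplacian_apply_self (i : ι) :
    weightedLaplacian B i i = ∑ j, B i j - B i i := by
  simp [weightedLaplacian]

lemma weightedLaplacian_apply_of_ne {i j : ι} (hij : i ≠ j) :
    weightedLaplacian B i j = -B i j := by
  simp [weightedLaplacian, diagonal_apply_ne _ hij]

lemma sum_weightedLaplacian_row (i : ι) : ∑ j, weightedLaplacian B i j = 0 := by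
  simp [weightedLaplacian, sum_sub_distrib, diagonal_apply]

end AddCommGroup

section CommRing

variable [CommRing R] {B : Matrix ι ι R}

lemma weightedLaplacian_mulVec (x : ι → R) (i : ι) :
    (weightedLaplacian B *ᵥ x) i = ∑ j, B i j * (x i - x j) := by
  rw [weightedLaplacian, sub_mulVec, Pi.sub_apply, mulVec_diagonal]
  simp only [mulVec, dotProduct, mul_sub, sum_mul, sum_sub_distrib]

lemma two_mul_dotProduct_weightedLaplacian_mulVec (hB : B.IsSymm) (x : ι → R) :
    2 * (x ⬝ᵥ (weightedLaplacian B *ᵥ x)) = ∑ i, ∑ j, B i j * (x i - x j) ^ 2 := by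
  have hquad : x ⬝ᵥ (weightedLaplacian B *ᵥ x) = ∑ i, ∑ j, B i j * (x i * (x i - x j)) := by
    simp only [dotProduct, weightedLaplacian_mulVec, mul_sum]
    exact sum_congr rfl fun i _ => sum_congr rfl fun j _ => by ring
  rw [hquad, two_mul]
  nth_rw 2 [sum_comm]
  simp only [hB.apply, ← sum_add_distrib]
  exact sum_congr rfl fun i _ => sum_congr rfl fun j _ => by ring

lemma posSemidef_weightedLaplacian [LinearOrder R] [IsStrictOrderedRing R] [StarRing R]
    [TrivialStar R] (hB : B.IsSymm) (hB0 : ∀ i j, 0 ≤ B i j) :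
    (weightedLaplacian B).PosSemidef := by
  refine .of_dotProduct_mulVec_nonneg ?_ fun x => ?_
  · rw [IsHermitian, conjTranspose_eq_transpose_of_trivial]
    exact (isSymm_diagonal _).sub hB
  · rw [star_trivial, ← mul_nonneg_iff_of_pos_left two_pos,
      two_mul_dotProduct_weightedLaplacian_mulVec hB]
    exact sum_nonneg fun i _ => sum_nonneg fun j _ => mul_nonneg (hB0 i j) (sq_nonneg _)

end CommRing
end Matrix

/-- The length of `[p, q] ∩ [r, t]`. -/
def overlap (p q r t : ℝ) : ℝ := max 0 (min q t - max p r)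

section Overlap

variable {p q r t : ℝ}

lemma overlap_nonneg (p q r t : ℝ) : 0 ≤ overlap p q r t := le_max_left _ _

lemma overlap_comm (p q r t : ℝ) : overlap p q r t = overlap r t p q := by
  rw [overlap, overlap, min_comm q t, max_comm p r]

lemma overlap_add_const (p q r t c : ℝ) :
    overlap (p + c) (q + c) (r + c) (t + c) = overlap p q r t := by
  rw [overlap, overlap, min_add_add_right, max_add_add_right, add_sub_add_right_eq_sub]

lemma overlap_eq_sub_clamp (hpq : p ≤ q) (hrt : r ≤ t) :
    overlap p q r t = min q (max p t) - min q (max p r) := by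
  simp only [overlap, min_def, max_def]
  split_ifs <;> linarith

lemma overlap_of_le_of_le (hpq : p ≤ q) (hrp : r ≤ p) (hqt : q ≤ t) : overlap p q r t = q - p := by
  rw [overlap, min_eq_left hqt, max_eq_left hrp, max_eq_right (sub_nonneg.2 hpq)]

lemma overlap_self_add_eq_zero {c : ℝ} (h : q - p ≤ |c|) : overlap p q (p + c) (q + c) = 0 := by
  refine max_eq_left (sub_nonpos.2 ?_)
  rcases abs_cases c with ⟨hc, -⟩ | ⟨hc, -⟩
  · linarith [min_le_left q (q + c), le_max_right p (p + c)]
  · linarith [min_le_right q (q + c), le_max_left p (p + c)]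

lemma overlap_add_overlap {u : ℝ} (hpq : p ≤ q) (hrt : r ≤ t) (htu : t ≤ u) :
    overlap p q r t + overlap p q t u = overlap p q r u := by
  rw [overlap_eq_sub_clamp hpq hrt, overlap_eq_sub_clamp hpq htu,
    overlap_eq_sub_clamp hpq (hrt.trans htu)]
  ring

lemma sum_range_overlap {b : ℕ → ℝ} (hpq : p ≤ q) (hb : Monotone b) (n : ℕ) :
    ∑ l ∈ range n, overlap p q (b l) (b (l + 1)) = overlap p q (b 0) (b n) := by
  rw [overlap_eq_sub_clamp hpq (hb n.zero_le), ← sum_range_sub (fun l => min q (max p (b l)))]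
  exact sum_congr rfl fun l _ => overlap_eq_sub_clamp hpq (hb l.le_succ)

end Overlap

def antipodalOverlap (a : ℕ → ℝ) (c : ℝ) (k l : ℕ) : ℝ :=
  overlap (a k) (a (k + 1)) (a l + c) (a (l + 1) + c) +
    overlap (a k) (a (k + 1)) (a l - c) (a (l + 1) - c)

section AntipodalOverlap

variable (a : ℕ → ℝ) (c : ℝ)

lemma antipodalOverlap_nonneg (k l : ℕ) : 0 ≤ antipodalOverlap a c k l :=
  add_nonneg (overlap_nonneg ..) (overlap_nonneg ..)

lemma antipodalOverlap_comm (k l : ℕ) : antipodalOverlap a c k l = antipodalOverlap a c l k := by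
  have hshift : ∀ x y z w d : ℝ, overlap x y (z + d) (w + d) = overlap z w (x - d) (y - d) := by
    intro x y z w d
    rw [overlap_comm, ← overlap_add_const z w (x - d) (y - d) d, sub_add_cancel, sub_add_cancel]
  rw [antipodalOverlap, antipodalOverlap, add_comm (overlap (a l) _ _ _)]
  congr 1
  · exact hshift ..
  · simpa only [sub_eq_add_neg, neg_neg] using hshift (a k) (a (k + 1)) (a l) (a (l + 1)) (-c)

variable {a c}

lemma antipodalOverlap_self {k : ℕ} (h : a (k + 1) - a k ≤ |c|) : antipodalOverlap a c k k = 0 := by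
  rw [antipodalOverlap, overlap_self_add_eq_zero h, sub_eq_add_neg, sub_eq_add_neg,
    overlap_self_add_eq_zero (by rwa [abs_neg]), add_zero]

lemma sum_range_antipodalOverlap {n k : ℕ} (ha : Monotone a) (hc : 2 * c = a n - a 0) (hk : k < n) :
    ∑ l ∈ range n, antipodalOverlap a c k l = a (k + 1) - a k := by
  have hk1 : a k ≤ a (k + 1) := ha k.le_succ
  have hc0 : 0 ≤ c := by linarith [ha n.zero_le]
  simp only [antipodalOverlap, sum_add_distrib, sub_eq_add_neg (a _) c]
  rw [sum_range_overlap hk1 (ha.add_const c), sum_range_overlap hk1 (ha.add_const (-c)), add_comm,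
    show a 0 + c = a n + -c by linarith, overlap_add_overlap hk1 (by linarith [ha n.zero_le])
    (by linarith), overlap_of_le_of_le hk1 (by linarith [ha k.zero_le]) (by linarith [ha hk])]

end AntipodalOverlap

theorem exists_isSymm_nonneg_zero_diag_sum_row {n : ℕ} (w : Fin n → ℝ) (hw : ∀ i, 0 ≤ w i)
    (h : ∀ i, 2 * w i ≤ ∑ j, w j) :
    ∃ B : Matrix (Fin n) (Fin n) ℝ, B.IsSymm ∧ (∀ i j, 0 ≤ B i j) ∧ (∀ i, B i i = 0) ∧
      ∀ i, ∑ j, B i j = w i := by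
  set v : ℕ → ℝ := fun k => if hk : k < n then w ⟨k, hk⟩ else 0
  have hv : ∀ i : Fin n, v i = w i := fun i => dif_pos i.isLt
  have hv0 : ∀ k, 0 ≤ v k := fun k => by
    simp only [v]
    split_ifs
    exacts [hw _, le_rfl]
  set a : ℕ → ℝ := fun k => ∑ j ∈ range k, v j
  have hstep : ∀ k, a (k + 1) - a k = v k := fun k => by simp [a, sum_range_succ]
  have ha : Monotone a := monotone_nat_of_le_succ fun k => by linarith [hstep k, hv0 k]
  set s := ∑ j, w j
  have hs : a n - a 0 = s := by simp [a, s, ← Fin.sum_univ_eq_sum_range, hv]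
  refine ⟨Matrix.of fun i j => antipodalOverlap a (s / 2) i j, ?_, ?_, ?_, ?_⟩
  · ext i j
    exact antipodalOverlap_comm ..
  · exact fun i j => antipodalOverlap_nonneg ..
  · intro i
    apply antipodalOverlap_self
    rw [hstep, hv, abs_of_nonneg (by linarith [hw i, h i])]
    linarith [h i]
  · intro i
    simp only [Matrix.of_apply]
    rw [Fin.sum_univ_eq_sum_range (antipodalOverlap a _ i) n,
      sum_range_antipodalOverlap ha (by rw [hs]; ring) i.isLt, hstep, hv]

theorem stmt1_general {n : ℕ} (σ : Fin n → ℝ)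
    (h : ∀ i, 2 * σ i ^ 2 ≤ ∑ j, σ j ^ 2) :
    ∃ S : Matrix (Fin n) (Fin n) ℝ, S.PosSemidef ∧ (∀ i, S i i = σ i ^ 2) ∧
      (∀ i j, i ≠ j → S i j ≤ 0) ∧ ∑ i, ∑ j, S i j = 0 := by
  obtain ⟨B, hsymm, hnonneg, hdiag, hrow⟩ :=
    exists_isSymm_nonneg_zero_diag_sum_row (fun i => σ i ^ 2) (fun i => sq_nonneg _) h
  refine ⟨B.weightedLaplacian, posSemidef_weightedLaplacian hsymm hnonneg, fun i => ?_,
    fun i j hij => ?_, ?_⟩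
  · rw [weightedLaplacian_apply_self, hrow, hdiag, sub_zero]
  · rw [weightedLaplacian_apply_of_ne B hij, neg_nonpos]
    exact hnonneg i j
  · simp only [sum_weightedLaplacian_row, sum_const_zero]

/-- If `2 max_i σ_i² ≤ ∑_i σ_i²`, there is a Gaussian joint mix with variances `σ_i²`,
nonpositive covariances, and a.s. zero sum; equivalently there is a positive semi-definite
matrix with diagonal `σ_i²`, nonpositive off-diagonal entries, and `1ᵀ Σ 1 = 0`. -/
theorem stmt1 {n : ℕ} (σ : Fin n → ℝ) (hσ : ∀ i, 0 ≤ σ i)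
    (h : ∀ i, 2 * σ i ^ 2 ≤ ∑ j, σ j ^ 2) :
    ∃ S : Matrix (Fin n) (Fin n) ℝ, S.PosSemidef ∧ (∀ i, S i i = σ i ^ 2) ∧
      (∀ i j, i ≠ j → S i j ≤ 0) ∧ ∑ i, ∑ j, S i j = 0 :=
  stmt1_general σ h
end

section
/- Let X = (X_1,...,X_n) be a joint mix (∑_i X_i constant a.s.) with finite second moments, and write S_A = ∑_{i∈A} X_i for A ⊆ [n]. Suppose (a) X_A and X_{[n]∖A} are conditionally independent given S_A for every A ⊆ [n], and (b) E[f(X_A) | S_A] is an increasing function of S_A for every coordinate-wise increasing f and every A ⊆ [n]. Then X is negatively associated: Cov(f(X_A), g(X_B)) ≤ 0 for all disjoint A, B ⊆ [n] and all coordinate-wise increasing f, g with square-integrable images. -/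
/-!
Fix disjoint `A`, `B` and condition on `S_A`. Since `B ⊆ Aᶜ` and `S_{Aᶜ} = c - S_A` almost surely,
conditioning on `S_A` is conditioning on `S_{Aᶜ}`, so by (b) `E[g(X_B) | S_A]` is a decreasing
function of `S_A`, while `E[f(X_A) | S_A]` is an increasing one. By (a),
`E[f(X_A) g(X_B)] = E[E[f(X_A) | S_A] E[g(X_B) | S_A]]`, and Chebyshev's inequality for an
increasing and a decreasing function of the same variable bounds this by `E[f(X_A)] E[g(X_B)]`.
Condition (a) is only assumed for bounded functions, so the argument is run for `f` and `g` clamped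
to `[-m, m]`, and dominated convergence lets `m → ∞`.
-/

open MeasureTheory ProbabilityTheory

/-- The σ-algebra generated by the partial sum `S_A = ∑_{i∈A} X_i`. -/
def condSigma {Ω : Type*} [MeasurableSpace Ω] {n : ℕ} (X : Fin n → Ω → ℝ)
    (A : Finset (Fin n)) : MeasurableSpace Ω :=
  MeasurableSpace.comap (fun ω => ∑ i ∈ A, X i ω) inferInstance

open Filter Topology

noncomputable def clamp (M t : ℝ) : ℝ := max (-M) (min M t)

lemma monotone_clamp (M : ℝ) : Monotone (clamp M) :=
  monotone_const.max (monotone_const.min monotone_id)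

lemma continuous_clamp (M : ℝ) : Continuous (clamp M) := by
  unfold clamp; fun_prop

lemma abs_clamp_le {M : ℝ} (hM : 0 ≤ M) (t : ℝ) : |clamp M t| ≤ M := by
  unfold clamp; rw [abs_le]; constructor <;> simp [hM]

lemma abs_clamp_le_abs {M : ℝ} (hM : 0 ≤ M) (t : ℝ) : |clamp M t| ≤ |t| := by
  unfold clamp; rw [abs_le]; constructor
  · exact le_max_of_le_right (le_min (by linarith [le_abs_self t, neg_abs_le t]) (neg_abs_le t))
  · exact max_le (by linarith [abs_nonneg t]) (min_le_of_right_le (le_abs_self t))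

lemma clamp_of_abs_le {M t : ℝ} (h : |t| ≤ M) : clamp M t = t := by
  rw [abs_le] at h; rw [clamp, min_eq_right h.2, max_eq_right h.1]

lemma tendsto_clamp (t : ℝ) : Tendsto (fun m : ℕ => clamp m t) atTop (𝓝 t) :=
  tendsto_const_nhds.congr' <| (eventually_ge_atTop ⌈|t|⌉₊).mono fun _ hm =>
    (clamp_of_abs_le ((Nat.le_ceil _).trans (by exact_mod_cast hm))).symm

section Chebyshev

variable {Ω : Type*} [MeasurableSpace Ω] {P : Measure Ω} {u v : Ω → ℝ}

lemma integrable_sub_mul_sub [IsFiniteMeasure P] (hu : Integrable u P) (hv : Integrable v P)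
    (huv : Integrable (fun ω => u ω * v ω) P) (a b : ℝ) :
    Integrable (fun ω => (u ω - a) * (v ω - b)) P := by
  simp_rw [sub_mul, mul_sub]
  exact (huv.sub (hu.mul_const b)).sub ((hv.const_mul a).sub (integrable_const _))

lemma integral_sub_mul_sub [IsProbabilityMeasure P] (hu : Integrable u P) (hv : Integrable v P)
    (huv : Integrable (fun ω => u ω * v ω) P) (a b : ℝ) :
    ∫ ω, (u ω - a) * (v ω - b) ∂P
      = ∫ ω, u ω * v ω ∂P - b * ∫ ω, u ω ∂P - a * ∫ ω, v ω ∂P + a * b := by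
  have huvb : Integrable (fun ω => u ω * v ω - u ω * b) P := huv.sub (hu.mul_const b)
  have hvab : Integrable (fun ω => a * v ω - a * b) P := (hv.const_mul a).sub (integrable_const _)
  simp_rw [sub_mul, mul_sub]
  rw [integral_sub huvb hvab, integral_sub huv (hu.mul_const b),
    integral_sub (hv.const_mul a) (integrable_const _), integral_mul_const, integral_const_mul,
    integral_const, probReal_univ, one_smul]
  ring

lemma integral_mul_le_of_antivary [IsProbabilityMeasure P] (hu : Integrable u P)
    (hv : Integrable v P) (huv : Integrable (fun ω => u ω * v ω) P) (h : Antivary u v) :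
    ∫ ω, u ω * v ω ∂P ≤ (∫ ω, u ω ∂P) * ∫ ω, v ω ∂P := by
  set C := ∫ ω, u ω * v ω ∂P
  set α := ∫ ω, u ω ∂P
  set β := ∫ ω, v ω ∂P
  -- Integrate `(u ω - u ω') * (v ω - v ω') ≤ 0` first in `ω`, then in `ω'`.
  have hω : ∀ ω', (u ω' - α) * (v ω' - β) + (C - α * β) ≤ 0 := fun ω' => by
    calc _ = ∫ ω, (u ω - u ω') * (v ω - v ω') ∂P := by
          rw [integral_sub_mul_sub hu hv huv]; ring
      _ ≤ 0 := integral_nonpos fun ω => h.sub_mul_sub_nonpos ω' ω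
  have hω' := integral_nonpos (μ := P) hω
  rw [integral_add (integrable_sub_mul_sub hu hv huv α β) (integrable_const _),
    integral_sub_mul_sub hu hv huv, integral_const, probReal_univ, one_smul] at hω'
  linarith

end Chebyshev

lemma condExp_comap_ae_eq_comp {Ω α β : Type*} [MeasurableSpace Ω] [MeasurableSpace α]
    [MeasurableSpace β] {P : Measure Ω} [IsFiniteMeasure P] {S : Ω → α} {T : Ω → β}
    (hS : Measurable S) (hT : Measurable T) {φ : α → β} {ψ : β → α} (hφ : Measurable φ)
    (hψ : Measurable ψ) (hTS : ∀ᵐ ω ∂P, T ω = φ (S ω)) (hST : ∀ᵐ ω ∂P, S ω = ψ (T ω))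
    {G : Ω → ℝ} (hG : Integrable G P) {h : β → ℝ} (hh : Measurable h)
    (hGT : P[G | MeasurableSpace.comap T inferInstance] =ᵐ[P] fun ω => h (T ω)) :
    P[G | MeasurableSpace.comap S inferInstance] =ᵐ[P] fun ω => h (φ (S ω)) := by
  have hhT : (fun ω => h (T ω)) =ᵐ[P] fun ω => h (φ (S ω)) := hTS.mono fun ω hω => congrArg h hω
  refine (ae_eq_condExp_of_forall_setIntegral_eq hS.comap_le hG
    (fun s _ _ => (integrable_condExp.congr (hGT.trans hhT)).integrableOn) ?_
    ((hh.comp hφ).comp (comap_measurable S)).aestronglyMeasurable).symm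
  rintro _ ⟨E, hE, rfl⟩ -
  have hset : S ⁻¹' E =ᵐ[P] T ⁻¹' (ψ ⁻¹' E) :=
    hST.mono fun ω hω => show (S ω ∈ E) = (ψ (T ω) ∈ E) by rw [hω]
  rw [setIntegral_congr_set hset, setIntegral_congr_set hset,
    ← setIntegral_condExp hT.comap_le hG ⟨_, hψ hE, rfl⟩]
  exact integral_congr_ae (ae_restrict_of_ae (hGT.trans hhT).symm)

lemma integral_mul_le_of_forall_clamp {Ω : Type*} [MeasurableSpace Ω] {P : Measure Ω}
    {F G : Ω → ℝ} (hF : Integrable F P) (hG : Integrable G P)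
    (hFG : Integrable (fun ω => F ω * G ω) P)
    (h : ∀ m : ℕ, ∫ ω, clamp m (F ω) * clamp m (G ω) ∂P
      ≤ (∫ ω, clamp m (F ω) ∂P) * ∫ ω, clamp m (G ω) ∂P) :
    ∫ ω, F ω * G ω ∂P ≤ (∫ ω, F ω ∂P) * ∫ ω, G ω ∂P := by
  have dominated {Ψ : ℕ → Ω → ℝ} {Φ : Ω → ℝ} (hΦ : Integrable Φ P)
      (hΨ : ∀ m, AEStronglyMeasurable (Ψ m) P) (hle : ∀ m ω, |Ψ m ω| ≤ |Φ ω|)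
      (hlim : ∀ ω, Tendsto (Ψ · ω) atTop (𝓝 (Φ ω))) :
      Tendsto (fun m => ∫ ω, Ψ m ω ∂P) atTop (𝓝 (∫ ω, Φ ω ∂P)) :=
    tendsto_integral_of_dominated_convergence _ hΨ hΦ.norm (fun m => ae_of_all _ (hle m))
      (ae_of_all _ hlim)
  have hmeas {Φ : Ω → ℝ} (hΦ : Integrable Φ P) (m : ℕ) :
      AEStronglyMeasurable (fun ω => clamp m (Φ ω)) P :=
    (continuous_clamp _).comp_aestronglyMeasurable hΦ.1
  have hclamp {Φ : Ω → ℝ} (hΦ : Integrable Φ P) :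
      Tendsto (fun m : ℕ => ∫ ω, clamp m (Φ ω) ∂P) atTop (𝓝 (∫ ω, Φ ω ∂P)) :=
    dominated hΦ (hmeas hΦ) (fun m _ => abs_clamp_le_abs m.cast_nonneg _) fun _ => tendsto_clamp _
  have hprod := dominated (Ψ := fun m ω => clamp m (F ω) * clamp m (G ω)) hFG
    (fun m => (hmeas hF m).mul (hmeas hG m))
    (fun m ω => by
      rw [abs_mul, abs_mul]
      exact mul_le_mul (abs_clamp_le_abs m.cast_nonneg _) (abs_clamp_le_abs m.cast_nonneg _)
        (abs_nonneg _) (abs_nonneg _))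
    fun _ => (tendsto_clamp _).mul (tendsto_clamp _)
  exact le_of_tendsto_of_tendsto' hprod ((hclamp hF).mul (hclamp hG)) h

section JointMix

variable {Ω : Type*} [mΩ : MeasurableSpace Ω] {n : ℕ}

variable (P : Measure Ω) (X : Fin n → Ω → ℝ) in
def CondIndepGivenPartialSums : Prop :=
  ∀ A : Finset (Fin n), ∀ f : ({i // i ∈ A} → ℝ) → ℝ, ∀ g : ({i // i ∉ A} → ℝ) → ℝ,
    Measurable f → Measurable g → (∃ C, ∀ x, |f x| ≤ C) → (∃ C, ∀ x, |g x| ≤ C) →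
    P[fun ω => f (fun i => X i.1 ω) * g (fun i => X i.1 ω) | condSigma X A]
      =ᵐ[P] fun ω => P[fun ω' => f (fun i => X i.1 ω') | condSigma X A] ω *
        P[fun ω' => g (fun i => X i.1 ω') | condSigma X A] ω

variable (P : Measure Ω) (X : Fin n → Ω → ℝ) in
def CondExpMonotoneInPartialSums : Prop :=
  ∀ A : Finset (Fin n), ∀ f : ({i // i ∈ A} → ℝ) → ℝ, Measurable f → Monotone f →
    Integrable (fun ω => f (fun i => X i.1 ω)) P →
    ∃ h : ℝ → ℝ, Monotone h ∧
      P[fun ω => f (fun i => X i.1 ω) | condSigma X A] =ᵐ[P] fun ω => h (∑ i ∈ A, X i ω)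

variable {P : Measure Ω} {X : Fin n → Ω → ℝ}

lemma exists_antitone_condExp_of_disjoint [IsFiniteMeasure P] (hmeas : ∀ i, Measurable (X i))
    {c : ℝ} (hJM : ∀ᵐ ω ∂P, ∑ i, X i ω = c) (hMon : CondExpMonotoneInPartialSums P X)
    {A B : Finset (Fin n)} (hAB : Disjoint A B) {g : ({i // i ∈ B} → ℝ) → ℝ}
    (hg : Measurable g) (hgmono : Monotone g)
    (hGint : Integrable (fun ω => g (fun i => X i.1 ω)) P) :
    ∃ k : ℝ → ℝ, Antitone k ∧
      P[fun ω => g (fun i => X i.1 ω) | condSigma X A] =ᵐ[P] fun ω => k (∑ i ∈ A, X i ω) := by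
  let g' : ({i // i ∈ Aᶜ} → ℝ) → ℝ := fun x =>
    g fun j => x ⟨j, Finset.mem_compl.2 (Finset.disjoint_right.1 hAB j.2)⟩
  obtain ⟨h, hmono, hh⟩ := hMon Aᶜ g' (hg.comp (by fun_prop))
    (fun x y hxy => hgmono fun j => hxy _) hGint
  have hsum : ∀ᵐ ω ∂P, ∑ i ∈ A, X i ω + ∑ i ∈ Aᶜ, X i ω = c :=
    hJM.mono fun ω hω => (Finset.sum_add_sum_compl _ _).trans hω
  refine ⟨fun s => h (c - s), fun s t hst => hmono (sub_le_sub_left hst c), ?_⟩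
  exact condExp_comap_ae_eq_comp (φ := (c - ·)) (ψ := (c - ·))
    (Finset.measurable_sum _ fun i _ => hmeas i) (Finset.measurable_sum _ fun i _ => hmeas i)
    (by fun_prop) (by fun_prop) (hsum.mono fun _ _ => by linarith)
    (hsum.mono fun _ _ => by linarith) hGint hmono.measurable hh

lemma integral_mul_le_of_bounded [IsProbabilityMeasure P] (hmeas : ∀ i, Measurable (X i))
    {c : ℝ} (hJM : ∀ᵐ ω ∂P, ∑ i, X i ω = c) (hCI : CondIndepGivenPartialSums P X)
    (hMon : CondExpMonotoneInPartialSums P X) {A B : Finset (Fin n)} (hAB : Disjoint A B)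
    {f : ({i // i ∈ A} → ℝ) → ℝ} {g : ({i // i ∈ B} → ℝ) → ℝ}
    (hf : Measurable f) (hg : Measurable g) (hfmono : Monotone f) (hgmono : Monotone g)
    {M : ℝ} (hfb : ∀ x, |f x| ≤ M) (hgb : ∀ x, |g x| ≤ M) :
    ∫ ω, f (fun i => X i.1 ω) * g (fun i => X i.1 ω) ∂P
      ≤ (∫ ω, f (fun i => X i.1 ω) ∂P) * ∫ ω, g (fun i => X i.1 ω) ∂P := by
  have hm : condSigma X A ≤ mΩ := (Finset.measurable_sum A fun i _ => hmeas i).comap_le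
  have hXs (s : Finset (Fin n)) : Measurable fun ω (i : {i // i ∈ s}) => X i.1 ω := by fun_prop
  obtain ⟨h, hmono, hF⟩ := hMon A f hf hfmono <|
    .of_bound (hf.comp (hXs A)).aestronglyMeasurable M (ae_of_all _ fun _ => hfb _)
  obtain ⟨k, hanti, hG⟩ := exists_antitone_condExp_of_disjoint hmeas hJM hMon hAB hg hgmono <|
    .of_bound (hg.comp (hXs B)).aestronglyMeasurable M (ae_of_all _ fun _ => hgb _)
  have hFG := (hCI A f (fun x => g fun j => x ⟨j, Finset.disjoint_right.1 hAB j.2⟩) hf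
    (hg.comp (by fun_prop)) ⟨M, hfb⟩ ⟨M, fun _ => hgb _⟩).trans (hF.mul hG)
  calc ∫ ω, f (fun i => X i.1 ω) * g (fun i => X i.1 ω) ∂P
      = ∫ ω, h (∑ i ∈ A, X i ω) * k (∑ i ∈ A, X i ω) ∂P :=
        (integral_condExp hm).symm.trans (integral_congr_ae hFG)
    _ ≤ (∫ ω, h (∑ i ∈ A, X i ω) ∂P) * ∫ ω, k (∑ i ∈ A, X i ω) ∂P :=
        integral_mul_le_of_antivary (integrable_condExp.congr hF) (integrable_condExp.congr hG)
          (integrable_condExp.congr hFG) ((hmono.antivary hanti).comp_right _)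
    _ = (∫ ω, f (fun i => X i.1 ω) ∂P) * ∫ ω, g (fun i => X i.1 ω) ∂P := by
        rw [← integral_congr_ae hF, ← integral_congr_ae hG, integral_condExp hm,
          integral_condExp hm]

end JointMix

theorem stmt3_general {Ω : Type*} [MeasurableSpace Ω] (P : Measure Ω) [IsProbabilityMeasure P]
    {n : ℕ} (X : Fin n → Ω → ℝ) (hmeas : ∀ i, Measurable (X i))
    (c : ℝ) (hJM : ∀ᵐ ω ∂P, ∑ i, X i ω = c)
    -- (a) conditional independence of `X_A` and `X_{[n]∖A}` given `S_A`
    (hCI : ∀ A : Finset (Fin n),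
      ∀ f : ({i // i ∈ A} → ℝ) → ℝ, ∀ g : ({i // i ∉ A} → ℝ) → ℝ,
        Measurable f → Measurable g →
        (∃ C, ∀ x, |f x| ≤ C) → (∃ C, ∀ x, |g x| ≤ C) →
        MeasureTheory.condExp (condSigma X A) P (fun ω => f (fun i => X i.1 ω) * g (fun i => X i.1 ω))
          =ᵐ[P] fun ω =>
            (MeasureTheory.condExp (condSigma X A) P (fun ω' => f (fun i => X i.1 ω')) ω) *
            (MeasureTheory.condExp (condSigma X A) P (fun ω' => g (fun i => X i.1 ω')) ω))
    -- (b) `E[f(X_A) | S_A]` increasing in `S_A`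
    (hMon : ∀ A : Finset (Fin n), ∀ f : ({i // i ∈ A} → ℝ) → ℝ,
      Measurable f → Monotone f →
      Integrable (fun ω => f (fun i => X i.1 ω)) P →
      ∃ h : ℝ → ℝ, Monotone h ∧
        MeasureTheory.condExp (condSigma X A) P (fun ω => f (fun i => X i.1 ω))
          =ᵐ[P] fun ω => h (∑ i ∈ A, X i ω)) :
    -- conclusion: `X` is negatively associated
    ∀ A B : Finset (Fin n), Disjoint A B →
      ∀ f : ({i // i ∈ A} → ℝ) → ℝ, ∀ g : ({i // i ∈ B} → ℝ) → ℝ,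
        Measurable f → Measurable g → Monotone f → Monotone g →
        MemLp (fun ω => f (fun i => X i.1 ω)) 2 P →
        MemLp (fun ω => g (fun i => X i.1 ω)) 2 P →
        cov P (fun ω => f (fun i => X i.1 ω)) (fun ω => g (fun i => X i.1 ω)) ≤ 0 := by
  intro A B hAB f g hf hg hfmono hgmono hf2 hg2
  rw [show cov P _ _ = covariance _ _ P from rfl, covariance_eq_sub hf2 hg2, sub_nonpos]
  refine integral_mul_le_of_forall_clamp (hf2.integrable one_le_two) (hg2.integrable one_le_two)
    (hf2.integrable_mul hg2) fun m => ?_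
  exact integral_mul_le_of_bounded hmeas hJM hCI hMon hAB
    ((continuous_clamp _).measurable.comp hf) ((continuous_clamp _).measurable.comp hg)
    ((monotone_clamp _).comp hfmono) ((monotone_clamp _).comp hgmono)
    (fun _ => abs_clamp_le m.cast_nonneg _) (fun _ => abs_clamp_le m.cast_nonneg _)

/-- If a joint mix `X` is such that (a) `X_A` and `X_{Aᶜ}` are conditionally independent
given `S_A` for every `A ⊆ [n]`, and (b) `E[f(X_A) | S_A]` is an increasing function of
`S_A` for every increasing `f` and every `A ⊆ [n]`, then `X` is negatively associated. -/
theorem stmt3 {Ω : Type*} [MeasurableSpace Ω] (P : Measure Ω) [IsProbabilityMeasure P]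
    {n : ℕ} (X : Fin n → Ω → ℝ) (hmeas : ∀ i, Measurable (X i))
    (hL2 : ∀ i, MemLp (X i) 2 P)
    (c : ℝ) (hJM : ∀ᵐ ω ∂P, ∑ i, X i ω = c)
    -- (a) conditional independence of `X_A` and `X_{[n]∖A}` given `S_A`
    (hCI : ∀ A : Finset (Fin n),
      ∀ f : ({i // i ∈ A} → ℝ) → ℝ, ∀ g : ({i // i ∉ A} → ℝ) → ℝ,
        Measurable f → Measurable g →
        (∃ C, ∀ x, |f x| ≤ C) → (∃ C, ∀ x, |g x| ≤ C) →
        MeasureTheory.condExp (condSigma X A) P (fun ω => f (fun i => X i.1 ω) * g (fun i => X i.1 ω))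
          =ᵐ[P] fun ω =>
            (MeasureTheory.condExp (condSigma X A) P (fun ω' => f (fun i => X i.1 ω')) ω) *
            (MeasureTheory.condExp (condSigma X A) P (fun ω' => g (fun i => X i.1 ω')) ω))
    -- (b) `E[f(X_A) | S_A]` increasing in `S_A`
    (hMon : ∀ A : Finset (Fin n), ∀ f : ({i // i ∈ A} → ℝ) → ℝ,
      Measurable f → Monotone f →
      Integrable (fun ω => f (fun i => X i.1 ω)) P →
      ∃ h : ℝ → ℝ, Monotone h ∧
        MeasureTheory.condExp (condSigma X A) P (fun ω => f (fun i => X i.1 ω))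
          =ᵐ[P] fun ω => h (∑ i ∈ A, X i ω)) :
    -- conclusion: `X` is negatively associated
    ∀ A B : Finset (Fin n), Disjoint A B →
      ∀ f : ({i // i ∈ A} → ℝ) → ℝ, ∀ g : ({i // i ∈ B} → ℝ) → ℝ,
        Measurable f → Measurable g → Monotone f → Monotone g →
        MemLp (fun ω => f (fun i => X i.1 ω)) 2 P →
        MemLp (fun ω => g (fun i => X i.1 ω)) 2 P →
        cov P (fun ω => f (fun i => X i.1 ω)) (fun ω => g (fun i => X i.1 ω)) ≤ 0 :=
  stmt3_general P X hmeas c hJM hCI hMon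
end

section
/- A random vector X taking values in a finite subset of ℝⁿ is a joint mix if and only if X can be written as a finite linear combination X = ∑_{k=1}^K c_k Y_k (with real coefficients c_k) of random vectors Y_k each taking values in {0,1}ⁿ with component sum equal to 1 almost surely. -/
open MeasureTheory

/-- A random vector taking finitely many values is a joint mix if and only if it is a finite
linear combination of binary multinomial random vectors (vectors valued in `{0,1}ⁿ` with
component sum `1`). -/
theorem stmt4 {Ω : Type*} [MeasurableSpace Ω] (P : Measure Ω) [IsProbabilityMeasure P]
    {n : ℕ} (X : Fin n → Ω → ℝ) (hmeas : ∀ i, Measurable (X i))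
    (hfin : (Set.range fun ω => fun i => X i ω).Finite) :
    (∃ c : ℝ, ∀ᵐ ω ∂P, ∑ i, X i ω = c) ↔
    ∃ (K : ℕ) (c : Fin K → ℝ) (Y : Fin K → Fin n → Ω → ℝ),
      (∀ k i, Measurable (Y k i)) ∧
      (∀ k, ∀ᵐ ω ∂P, (∀ i, Y k i ω = 0 ∨ Y k i ω = 1) ∧ ∑ i, Y k i ω = 1) ∧
      (∀ᵐ ω ∂P, ∀ i, X i ω = ∑ k, c k * Y k i ω) := by
  constructor
  · rintro ⟨c, hc⟩
    rcases Nat.eq_zero_or_pos n with hn | hn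
    · subst hn
      exact ⟨0, Fin.elim0, Fin.elim0, fun k => k.elim0, fun k => k.elim0,
        Filter.Eventually.of_forall fun ω i => i.elim0⟩
    · set i0 : Fin n := ⟨0, hn⟩ with hi0
      set F : Finset (Fin n → ℝ) := hfin.toFinset with hF
      set ι := ((↥F × Fin n) ⊕ Unit) with hι
      set Yb : ι → Fin n → Ω → ℝ := fun k i ω =>
        match k with
        | .inl (v, j) => if (fun i' => X i' ω) = (v : Fin n → ℝ) then
            (if i = j then 1 else 0) else (if i = i0 then 1 else 0)
        | .inr _ => if i = i0 then 1 else 0 with hYb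
      set C : ι → ℝ := fun k =>
        match k with
        | .inl (v, j) => (v : Fin n → ℝ) j
        | .inr _ => c - ∑ v ∈ F, ∑ j, v j with hC
      have e : Fin (Fintype.card ι) ≃ ι := (Fintype.equivFin ι).symm
      have hYbmeas : ∀ (k : ι) (i : Fin n), Measurable (Yb k i) := by
        rintro (⟨v, j⟩ | u) i
        · have hA : MeasurableSet {ω | (fun i' => X i' ω) = (v : Fin n → ℝ)} := by
            have : {ω | (fun i' => X i' ω) = (v : Fin n → ℝ)} =
                ⋂ i', (X i') ⁻¹' {(v : Fin n → ℝ) i'} := by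
              ext ω
              simp [funext_iff]
            rw [this]
            exact MeasurableSet.iInter fun i' => (hmeas i') (measurableSet_singleton _)
          exact Measurable.ite hA measurable_const measurable_const
        · exact measurable_const
      have hYb01 : ∀ (k : ι) (ω : Ω),
          (∀ i, Yb k i ω = 0 ∨ Yb k i ω = 1) ∧ ∑ i, Yb k i ω = 1 := by
        rintro (⟨v, j⟩ | u) ω
        · constructor
          · intro i
            simp only [hYb]
            split_ifs <;> simp
          · by_cases h : (fun i' => X i' ω) = (v : Fin n → ℝ) <;> simp [hYb, h]
        · constructor
          · intro i
            simp only [hYb]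
            split_ifs <;> simp
          · simp [hYb]
      refine ⟨Fintype.card ι, fun k => C (e k), fun k => Yb (e k), ?_, ?_, ?_⟩
      · exact fun k i => hYbmeas (e k) i
      · exact fun k => Filter.Eventually.of_forall fun ω => hYb01 (e k) ω
      · filter_upwards [hc] with ω hw
        intro i
        set w : Fin n → ℝ := fun i' => X i' ω with hwdef
        have hwF : w ∈ F := by
          rw [hF, Set.Finite.mem_toFinset]
          exact ⟨ω, rfl⟩
        have key : ∑ k : ι, C k * Yb k i ω = w i := by
          rw [Fintype.sum_sum_type]
          have hunit : ∑ u : Unit, C (.inr u) * Yb (.inr u) i ω =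
              (c - ∑ v ∈ F, ∑ j, v j) * (if i = i0 then 1 else 0) := by
            simp [hYb, hC]
          rw [hunit, Fintype.sum_prod_type]
          have hcoe : ∑ v : ↥F, ∑ j, C (.inl (v, j)) * Yb (.inl (v, j)) i ω =
              ∑ v ∈ F, ∑ j, v j * (if w = v then (if i = j then 1 else 0)
                else (if i = i0 then 1 else 0)) := by
            rw [← Finset.sum_coe_sort F (fun v => ∑ j, v j * (if w = v then
              (if i = j then 1 else 0) else (if i = i0 then 1 else 0)))]
          rw [hcoe]
          rw [← Finset.add_sum_erase F _ hwF]
          have h1 : ∑ j, w j * (if w = w then (if i = j then 1 else 0)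
              else (if i = i0 then 1 else 0)) = w i := by
            simp
          have h2 : ∑ v ∈ F.erase w, ∑ j, v j * (if w = v then (if i = j then 1 else 0)
              else (if i = i0 then 1 else 0)) =
              (∑ v ∈ F.erase w, ∑ j, v j) * (if i = i0 then 1 else 0) := by
            rw [Finset.sum_mul]
            refine Finset.sum_congr rfl fun v hv => ?_
            have hne : ¬ (w = v) := fun h => (Finset.ne_of_mem_erase hv) h.symm
            simp only [if_neg hne]
            rw [← Finset.sum_mul]
          rw [h1, h2]
          have h3 : ∑ v ∈ F.erase w, ∑ j, v j = (∑ v ∈ F, ∑ j, v j) - ∑ j, w j := by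
            rw [Finset.sum_erase_eq_sub hwF]
          rw [h3]
          have h4 : ∑ j, w j = c := hw
          rw [h4]
          ring
        calc X i ω = w i := rfl
          _ = ∑ k : ι, C k * Yb k i ω := key.symm
          _ = ∑ k, C (e k) * Yb (e k) i ω := (Equiv.sum_comp e fun k => C k * Yb k i ω).symm
  · rintro ⟨K, c, Y, hYm, hY, hX⟩
    refine ⟨∑ k, c k, ?_⟩
    filter_upwards [hX, ae_all_iff.2 hY] with ω h3 h2
    calc ∑ i, X i ω = ∑ i, ∑ k, c k * Y k i ω :=
          Finset.sum_congr rfl fun i _ => h3 i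
      _ = ∑ k, c k * ∑ i, Y k i ω := by
          rw [Finset.sum_comm]
          exact Finset.sum_congr rfl fun k _ => (Finset.mul_sum _ _ _).symm
      _ = ∑ k, c k := Finset.sum_congr rfl fun k _ => by rw [(h2 k).2, mul_one]
end

section
/- If a univariate distribution F supports an n-joint mix X that is negatively supermodular dependent (NSD), then F supports an exchangeable NSD n-joint mix; specifically, the random vector X^Π = (X_{Π(1)},...,X_{Π(n)}), where Π is a uniform random permutation of [n] independent of X, is an exchangeable NSD joint mix with marginals F. -/
open MeasureTheory ProbabilityTheory

instance permMeasurableSpace (n : ℕ) : MeasurableSpace (Equiv.Perm (Fin n)) := ⊤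

/-- The uniform probability measure on permutations of `[n]`. -/
noncomputable def permMeasure (n : ℕ) : Measure (Equiv.Perm (Fin n)) :=
  haveI : Nonempty (Equiv.Perm (Fin n)) := ⟨1⟩
  (PMF.uniformOfFintype (Equiv.Perm (Fin n))).toMeasure

/-- Negative supermodular dependence: `E[ψ(X)] ≤ E[ψ(X^⊥)]` for all supermodular `ψ`
(the law of `X^⊥` is the product of the marginals of `X`). -/
def NSD {Ω : Type*} [MeasurableSpace Ω] {n : ℕ} (P : Measure Ω) (X : Fin n → Ω → ℝ) : Prop :=
  ∀ ψ : (Fin n → ℝ) → ℝ, Measurable ψ →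
    (∀ x y, ψ x + ψ y ≤ ψ (x ⊓ y) + ψ (x ⊔ y)) →
    Integrable (fun ω => ψ (fun i => X i ω)) P →
    Integrable ψ (Measure.pi fun i => Measure.map (X i) P) →
    ∫ ω, ψ (fun i => X i ω) ∂P ≤ ∫ x, ψ x ∂(Measure.pi fun i => Measure.map (X i) P)

section Aux

variable {n : ℕ}

instance (n : ℕ) : MeasurableSingletonClass (Equiv.Perm (Fin n)) := ⟨fun _ => trivial⟩

instance permNonempty (n : ℕ) : Nonempty (Equiv.Perm (Fin n)) := ⟨1⟩

instance (n : ℕ) : IsProbabilityMeasure (permMeasure n) := by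
  unfold permMeasure; infer_instance

lemma permMeasure_ae {p : Equiv.Perm (Fin n) → Prop}
    (h : ∀ᵐ σ ∂permMeasure n, p σ) : ∀ σ, p σ := by
  intro σ
  by_contra hσ
  have hs : permMeasure n {τ | ¬ p τ} = 0 := by
    rw [MeasureTheory.ae_iff] at h; exact h
  have h1 : permMeasure n {σ} ≤ permMeasure n {τ | ¬ p τ} :=
    measure_mono (by simpa using hσ)
  have h2 : permMeasure n {σ} =
      (PMF.uniformOfFintype (Equiv.Perm (Fin n))) σ := by
    rw [permMeasure, PMF.toMeasure_apply_singleton _ _ (measurableSet_singleton σ)]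
  have h0 : (PMF.uniformOfFintype (Equiv.Perm (Fin n))) σ = 0 := by
    rw [← h2]; exact le_antisymm (hs ▸ h1) bot_le
  rw [PMF.uniformOfFintype_apply] at h0
  simp [Fintype.card_ne_zero] at h0

lemma permMeasure_map_equiv (e : Equiv.Perm (Fin n) ≃ Equiv.Perm (Fin n)) :
    Measure.map e (permMeasure n) = permMeasure n := by
  rw [permMeasure, PMF.toMeasure_map _ _ (measurable_from_top)]
  congr 1
  ext b
  rw [PMF.map_apply]
  rw [tsum_eq_single (e.symm b) (fun a ha => by
    rw [if_neg]; intro hba; exact ha (by simp [hba]))]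
  simp [PMF.uniformOfFintype_apply]

lemma measY {Ω : Type*} [MeasurableSpace Ω] (X : Fin n → Ω → ℝ)
    (hmeas : ∀ i, Measurable (X i)) (i : Fin n) :
    Measurable fun ωπ : Ω × Equiv.Perm (Fin n) => X (ωπ.2 i) ωπ.1 :=
  measurable_from_prod_countable_left fun σ => hmeas (σ i)

/-- permuting coordinates preserves `Measure.pi fun _ => F`. -/
lemma measurePreserving_permute (σ : Equiv.Perm (Fin n)) (F : Measure ℝ) [SigmaFinite F] :
    MeasurePreserving (fun x : Fin n → ℝ => fun i => x (σ i))
      (Measure.pi fun _ => F) (Measure.pi fun _ => F) := by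
  have key : ⇑(MeasurableEquiv.piCongrLeft (fun _ : Fin n => ℝ) σ.symm)
      = fun x => fun i => x (σ i) := by
    funext x i
    rw [MeasurableEquiv.coe_piCongrLeft]
    have h := Equiv.piCongrLeft_apply_apply (fun _ : Fin n => ℝ) σ.symm x (σ i)
    simpa using h
  have h := MeasureTheory.measurePreserving_piCongrLeft
    (α := fun _ : Fin n => ℝ) (μ := fun _ => F) σ.symm
  rwa [key] at h

end Aux

/-- If `F` supports an NSD `n`-joint mix `X`, then the randomly permuted vector
`X^Π = (X_{Π(1)},…,X_{Π(n)})`, with `Π` uniform and independent of `X`, is an exchangeable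
NSD joint mix with marginals `F`. -/
theorem stmt5 {Ω : Type*} [MeasurableSpace Ω] (P : Measure Ω) [IsProbabilityMeasure P]
    {n : ℕ} (F : Measure ℝ) [IsProbabilityMeasure F]
    (X : Fin n → Ω → ℝ) (hmeas : ∀ i, Measurable (X i))
    (hmarg : ∀ i, Measure.map (X i) P = F)
    (c : ℝ) (hJM : ∀ᵐ ω ∂P, ∑ i, X i ω = c)
    (hNSD : NSD P X) :
    (∀ i, Measure.map (fun ωπ : Ω × Equiv.Perm (Fin n) => X (ωπ.2 i) ωπ.1)
        (P.prod (permMeasure n)) = F) ∧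
    (∀ᵐ ωπ ∂(P.prod (permMeasure n)), ∑ i, X (ωπ.2 i) ωπ.1 = c) ∧
    (∀ π : Equiv.Perm (Fin n),
      Measure.map (fun ωπ : Ω × Equiv.Perm (Fin n) => fun i => X (ωπ.2 (π i)) ωπ.1)
          (P.prod (permMeasure n))
        = Measure.map (fun ωπ : Ω × Equiv.Perm (Fin n) => fun i => X (ωπ.2 i) ωπ.1)
          (P.prod (permMeasure n))) ∧
    NSD (P.prod (permMeasure n)) (fun i ωπ => X (ωπ.2 i) ωπ.1) := by
  set ν := permMeasure n with hν
  -- Part 1: marginals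
  have hmarg' : ∀ i, Measure.map (fun ωπ : Ω × Equiv.Perm (Fin n) => X (ωπ.2 i) ωπ.1)
      (P.prod ν) = F := by
    intro i
    ext s hs
    rw [Measure.map_apply (measY X hmeas i) hs,
      Measure.prod_apply_symm ((measY X hmeas i) hs)]
    have : ∀ σ : Equiv.Perm (Fin n),
        P ((fun ω => (ω, σ)) ⁻¹' ((fun ωπ : Ω × Equiv.Perm (Fin n) =>
          X (ωπ.2 i) ωπ.1) ⁻¹' s)) = F s := by
      intro σ
      have : ((fun ω => (ω, σ)) ⁻¹' ((fun ωπ : Ω × Equiv.Perm (Fin n) =>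
          X (ωπ.2 i) ωπ.1) ⁻¹' s)) = X (σ i) ⁻¹' s := rfl
      rw [this, ← Measure.map_apply (hmeas (σ i)) hs, hmarg]
    simp_rw [this]
    simp
  refine ⟨hmarg', ?_, ?_, ?_⟩
  -- Part 2: joint mix
  · have hfst : (P.prod ν).map Prod.fst = P := by
      rw [Measure.map_fst_prod]; simp
    have h1 : ∀ᵐ ωπ ∂(P.prod ν), ∑ i, X i ωπ.1 = c :=
      MeasureTheory.ae_of_ae_map (f := Prod.fst) (μ := P.prod ν)
        measurable_fst.aemeasurable (p := fun ω => ∑ i, X i ω = c)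
        (by rw [hfst]; exact hJM)
    filter_upwards [h1] with ωπ hω
    rw [Equiv.sum_comp ωπ.2 (fun j => X j ωπ.1)]
    exact hω
  -- Part 3: exchangeability
  · intro π
    have hg : Measurable (fun ωπ : Ω × Equiv.Perm (Fin n) => fun i => X (ωπ.2 i) ωπ.1) :=
      measurable_pi_lambda _ fun i => measY X hmeas i
    have hT : Measurable (fun ωπ : Ω × Equiv.Perm (Fin n) => (ωπ.1, ωπ.2 * π)) :=
      measurable_fst.prodMk
        (Measurable.comp (measurable_from_top :
          Measurable (fun σ : Equiv.Perm (Fin n) => σ * π)) measurable_snd)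
    have hcomp : (fun ωπ : Ω × Equiv.Perm (Fin n) => fun i => X (ωπ.2 (π i)) ωπ.1)
        = (fun ωπ : Ω × Equiv.Perm (Fin n) => fun i => X (ωπ.2 i) ωπ.1) ∘
          (fun ωπ => (ωπ.1, ωπ.2 * π)) := rfl
    have hmapT : Measure.map (fun ωπ : Ω × Equiv.Perm (Fin n) => (ωπ.1, ωπ.2 * π))
        (P.prod ν) = P.prod ν := by
      have : (fun ωπ : Ω × Equiv.Perm (Fin n) => (ωπ.1, ωπ.2 * π))
          = Prod.map id (fun σ => σ * π) := rfl
      rw [this, ← Measure.map_prod_map _ _ measurable_id measurable_from_top,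
        Measure.map_id]
      congr 1
      exact permMeasure_map_equiv (Equiv.mulRight π)
    rw [hcomp, ← Measure.map_map hg hT, hmapT]
  -- Part 4: NSD
  · intro ψ hψm hsup hint1 hint2
    have hpiY : (Measure.pi fun i => Measure.map
        ((fun i (ωπ : Ω × Equiv.Perm (Fin n)) => X (ωπ.2 i) ωπ.1) i) (P.prod ν))
        = Measure.pi fun _ => F := by
      congr 1
      funext i
      exact hmarg' i
    have hpiX : (Measure.pi fun i => Measure.map (X i) P) = Measure.pi fun _ => F := by
      congr 1; funext i; exact hmarg i
    rw [hpiY] at hint2 ⊢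
    -- integrability of sections
    have hsec : ∀ σ : Equiv.Perm (Fin n),
        Integrable (fun ω => ψ (fun i => X (σ i) ω)) P :=
      permMeasure_ae (hint1.prod_left_ae)
    -- bound for each permutation
    have hbound : ∀ σ : Equiv.Perm (Fin n),
        ∫ ω, ψ (fun i => X (σ i) ω) ∂P ≤ ∫ x, ψ x ∂(Measure.pi fun _ : Fin n => F) := by
      intro σ
      set ψσ : (Fin n → ℝ) → ℝ := fun x => ψ (fun i => x (σ i)) with hψσ
      have hmσ : Measurable ψσ :=
        hψm.comp (measurable_pi_lambda _ fun i => measurable_pi_apply _)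
      have hsupσ : ∀ x y, ψσ x + ψσ y ≤ ψσ (x ⊓ y) + ψσ (x ⊔ y) := fun x y =>
        hsup (fun i => x (σ i)) (fun i => y (σ i))
      have hmp := measurePreserving_permute σ F
      have hintσ : Integrable ψσ (Measure.pi fun _ : Fin n => F) := by
        have := (hmp.integrable_comp hψm.aestronglyMeasurable).mpr hint2
        exact this
      have heq : ∫ x, ψσ x ∂(Measure.pi fun _ : Fin n => F)
          = ∫ x, ψ x ∂(Measure.pi fun _ : Fin n => F) := by
        rw [hψσ]
        calc ∫ x, ψ (fun i => x (σ i)) ∂(Measure.pi fun _ : Fin n => F)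
            = ∫ y, ψ y ∂(Measure.map (fun x : Fin n → ℝ => fun i => x (σ i))
              (Measure.pi fun _ : Fin n => F)) := by
              rw [MeasureTheory.integral_map hmp.measurable.aemeasurable
                hψm.aestronglyMeasurable]
          _ = ∫ x, ψ x ∂(Measure.pi fun _ : Fin n => F) := by rw [hmp.map_eq]
      have h := hNSD ψσ hmσ hsupσ (hsec σ) (by rw [hpiX]; exact hintσ)
      rw [hpiX] at h
      calc ∫ ω, ψ (fun i => X (σ i) ω) ∂P
          = ∫ ω, ψσ (fun i => X i ω) ∂P := rfl
        _ ≤ ∫ x, ψσ x ∂(Measure.pi fun _ : Fin n => F) := h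
        _ = ∫ x, ψ x ∂(Measure.pi fun _ : Fin n => F) := heq
    -- Fubini and averaging
    have hfub : ∫ ωπ, ψ (fun i => X (ωπ.2 i) ωπ.1) ∂(P.prod ν)
        = ∫ σ, ∫ ω, ψ (fun i => X (σ i) ω) ∂P ∂ν :=
      MeasureTheory.integral_prod_symm _ hint1
    rw [hfub]
    calc ∫ σ, ∫ ω, ψ (fun i => X (σ i) ω) ∂P ∂ν
        ≤ ∫ _, (∫ x, ψ x ∂(Measure.pi fun _ : Fin n => F)) ∂ν :=
          integral_mono (Integrable.of_finite) (integrable_const _) hbound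
      _ = ∫ x, ψ x ∂(Measure.pi fun _ : Fin n => F) := by
          rw [integral_const]; simp
end

section
/- If a univariate distribution F supports a negative orthant dependent (NOD) n-joint mix, then F supports an exchangeable NOD n-joint mix. -/
/-!
Symmetrize by a uniformly random relabelling of the coordinates: on `Ω × Sₙ` with `P ⊗ uniform`
put `Yᵢ(ω, σ) = X_{σ i}(ω)`. Each slice `σ` is the NOD joint mix `X ∘ σ`, with the same sum and
the same marginals `F`. Because all marginals equal `F`, the orthant bounds `∏ᵢ F(Aᵢ)` do not
depend on `σ` and survive averaging over `σ`; invariance of the uniform measure under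
`σ ↦ σ * π` gives exchangeability.
-/

open MeasureTheory ProbabilityTheory

/-- Negative lower orthant dependence. -/
def NLOD {Ω : Type*} [MeasurableSpace Ω] {n : ℕ} (P : Measure Ω) (X : Fin n → Ω → ℝ) : Prop :=
  ∀ t : Fin n → ℝ, P {ω | ∀ i, X i ω ≤ t i} ≤ ∏ i, P {ω | X i ω ≤ t i}

/-- Negative upper orthant dependence. -/
def NUOD {Ω : Type*} [MeasurableSpace Ω] {n : ℕ} (P : Measure Ω) (X : Fin n → Ω → ℝ) : Prop :=
  ∀ t : Fin n → ℝ, P {ω | ∀ i, t i < X i ω} ≤ ∏ i, P {ω | t i < X i ω}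

/-- Negative orthant dependence. -/
def NOD {Ω : Type*} [MeasurableSpace Ω] {n : ℕ} (P : Measure Ω) (X : Fin n → Ω → ℝ) : Prop :=
  NLOD P X ∧ NUOD P X

open scoped ENNReal

namespace MeasureTheory.Measure

variable {α β : Type*} [MeasurableSpace α] [MeasurableSpace β] {μ : Measure α} {ν : Measure β}
  [SFinite μ] [IsProbabilityMeasure ν] {s : Set (α × β)} {c : ℝ≥0∞}

theorem prod_apply_le_of_forall_le (hs : MeasurableSet s)
    (h : ∀ b, μ ((fun a => (a, b)) ⁻¹' s) ≤ c) :
    μ.prod ν s ≤ c := by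
  rw [prod_apply_symm hs]
  calc _ ≤ ∫⁻ _, c ∂ν := lintegral_mono h
    _ = c := by simp

theorem prod_apply_eq_of_forall_eq (hs : MeasurableSet s)
    (h : ∀ b, μ ((fun a => (a, b)) ⁻¹' s) = c) :
    μ.prod ν s = c := by
  simp [prod_apply_symm hs, h]

end MeasureTheory.Measure

theorem ProbabilityTheory.uniformOn_univ_eq_smul_count {G : Type*} [MeasurableSpace G] :
    uniformOn (Set.univ : Set G) = (Measure.count (Set.univ : Set G))⁻¹ • Measure.count := by
  simp [uniformOn, ProbabilityTheory.cond]

instance ProbabilityTheory.isMulRightInvariant_uniformOn_univ {G : Type*} [Group G]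
    [MeasurableSpace G] [MeasurableMul G] :
    (uniformOn (Set.univ : Set G)).IsMulRightInvariant := by
  rw [uniformOn_univ_eq_smul_count]; infer_instance

section Symmetrize

variable {Ω ι : Type*} [MeasurableSpace Ω] [Fintype ι]

theorem measure_setOf_forall_comp_perm_le {P : Measure Ω} {X : ι → Ω → ℝ} (σ : Equiv.Perm ι)
    (A : ι → Set ℝ)
    (h : P {ω | ∀ j, X j ω ∈ A (σ.symm j)} ≤ ∏ j, P {ω | X j ω ∈ A (σ.symm j)}) :
    P {ω | ∀ i, X (σ i) ω ∈ A i} ≤ ∏ i, P {ω | X (σ i) ω ∈ A i} := by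
  have hset : {ω | ∀ i, X (σ i) ω ∈ A i} = {ω | ∀ j, X j ω ∈ A (σ.symm j)} := by
    ext ω
    simp only [Set.mem_ofPred_eq, ← σ.forall_congr_right (q := fun j => X j ω ∈ A (σ.symm j)),
      Equiv.symm_apply_apply]
  rw [hset]
  refine h.trans_eq ?_
  rw [← Equiv.prod_comp σ]
  simp

instance : MeasurableSpace (Equiv.Perm ι) := ⊤

instance : DiscreteMeasurableSpace (Equiv.Perm ι) := ⟨fun _ => trivial⟩

def symmetrize (X : ι → Ω → ℝ) (i : ι) (p : Ω × Equiv.Perm ι) : ℝ := X (p.2 i) p.1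

variable {P : Measure Ω} [SFinite P] {ν : Measure (Equiv.Perm ι)}
  {X : ι → Ω → ℝ} {F : Measure ℝ}

theorem measurable_symmetrize (hX : ∀ i, Measurable (X i)) (i : ι) :
    Measurable (symmetrize X i) :=
  measurable_from_prod_countable_left fun σ => hX (σ i)

theorem map_symmetrize [IsProbabilityMeasure ν] (hX : ∀ i, Measurable (X i))
    (hF : ∀ i, P.map (X i) = F) (i : ι) :
    (P.prod ν).map (symmetrize X i) = F := by
  ext s hs
  rw [Measure.map_apply (measurable_symmetrize hX i) hs]
  refine Measure.prod_apply_eq_of_forall_eq (measurable_symmetrize hX i hs) fun σ => ?_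
  rw [← hF (σ i), Measure.map_apply (hX _) hs]
  rfl

theorem ae_sum_symmetrize_eq [IsProbabilityMeasure ν] (hX : ∀ i, Measurable (X i)) {c : ℝ}
    (hc : ∀ᵐ ω ∂P, ∑ i, X i ω = c) : ∀ᵐ p ∂(P.prod ν), ∑ i, symmetrize X i p = c := by
  rw [ae_iff] at hc ⊢
  have hmeas : MeasurableSet {p | ¬∑ i, symmetrize X i p = c} :=
    (measurableSet_eq_fun (Finset.measurable_sum _ fun i _ => measurable_symmetrize hX i)
      measurable_const).compl
  refine Measure.prod_apply_eq_of_forall_eq hmeas fun σ => ?_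
  convert hc using 2
  ext ω
  simp [symmetrize, Equiv.sum_comp σ (fun j => X j ω)]

theorem measure_setOf_forall_symmetrize_le [IsProbabilityMeasure ν] (hX : ∀ i, Measurable (X i))
    (hF : ∀ i, P.map (X i) = F) {A : ι → Set ℝ} (hA : ∀ i, MeasurableSet (A i))
    (h : ∀ σ : Equiv.Perm ι, P {ω | ∀ i, X (σ i) ω ∈ A i} ≤ ∏ i, P {ω | X (σ i) ω ∈ A i}) :
    (P.prod ν) {p | ∀ i, symmetrize X i p ∈ A i} ≤
      ∏ i, (P.prod ν) {p | symmetrize X i p ∈ A i} := by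
  have hmarg : ∀ (j : ι) (s : Set ℝ), MeasurableSet s → P (X j ⁻¹' s) = F s := fun j s hs => by
    rw [← hF j, Measure.map_apply (hX j) hs]
  have hmeas : MeasurableSet {p | ∀ i, symmetrize X i p ∈ A i} := by
    simp only [Set.ofPred_forall]
    exact MeasurableSet.iInter fun i => measurable_symmetrize hX i (hA i)
  calc (P.prod ν) {p | ∀ i, symmetrize X i p ∈ A i} ≤ ∏ i, F (A i) :=
        Measure.prod_apply_le_of_forall_le hmeas fun σ =>
          (h σ).trans_eq (Finset.prod_congr rfl fun i _ => hmarg (σ i) _ (hA i))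
    _ = ∏ i, (P.prod ν) {p | symmetrize X i p ∈ A i} := by
        refine Finset.prod_congr rfl fun i _ => ?_
        rw [← map_symmetrize (ν := ν) hX hF i,
          Measure.map_apply (measurable_symmetrize hX i) (hA i)]
        rfl

theorem map_symmetrize_comp_perm [SFinite ν] [ν.IsMulRightInvariant] (hX : ∀ i, Measurable (X i))
    (π : Equiv.Perm ι) :
    (P.prod ν).map (fun p i => symmetrize X (π i) p) =
      (P.prod ν).map (fun p i => symmetrize X i p) := by
  have hmul : Measurable (fun σ : Equiv.Perm ι => σ * π) := measurable_mul_const π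
  have hinv : (P.prod ν).map (Prod.map id (· * π)) = P.prod ν := by
    rw [← Measure.map_prod_map _ _ measurable_id hmul, Measure.map_id, map_mul_right_eq_self]
  rw [← hinv, Measure.map_map (measurable_pi_lambda _ (measurable_symmetrize hX))
    (measurable_id.prodMap hmul), hinv]
  rfl

end Symmetrize

section NOD

variable {Ω : Type*} [MeasurableSpace Ω] {n : ℕ} {P : Measure Ω} [SFinite P]
  {ν : Measure (Equiv.Perm (Fin n))} [IsProbabilityMeasure ν] {X : Fin n → Ω → ℝ} {F : Measure ℝ}

theorem NLOD.symmetrize (h : NLOD P X) (hX : ∀ i, Measurable (X i)) (hF : ∀ i, P.map (X i) = F) :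
    NLOD (P.prod ν) (symmetrize X) := fun t =>
  measure_setOf_forall_symmetrize_le hX hF (fun _ => measurableSet_Iic) fun σ =>
    measure_setOf_forall_comp_perm_le σ (fun i => Set.Iic (t i)) (h _)

theorem NUOD.symmetrize (h : NUOD P X) (hX : ∀ i, Measurable (X i)) (hF : ∀ i, P.map (X i) = F) :
    NUOD (P.prod ν) (symmetrize X) := fun t =>
  measure_setOf_forall_symmetrize_le hX hF (fun _ => measurableSet_Ioi) fun σ =>
    measure_setOf_forall_comp_perm_le σ (fun i => Set.Ioi (t i)) (h _)

end NOD

theorem stmt6_general {n : ℕ} (F : Measure ℝ)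
    (h : ∃ (Ω : Type) (_ : MeasurableSpace Ω) (P : Measure Ω) (_ : IsProbabilityMeasure P)
        (X : Fin n → Ω → ℝ),
      (∀ i, Measurable (X i)) ∧ (∀ i, Measure.map (X i) P = F) ∧
      (∃ c : ℝ, ∀ᵐ ω ∂P, ∑ i, X i ω = c) ∧ NOD P X) :
    ∃ (Ω : Type) (_ : MeasurableSpace Ω) (P : Measure Ω) (_ : IsProbabilityMeasure P)
        (X : Fin n → Ω → ℝ),
      (∀ i, Measurable (X i)) ∧ (∀ i, Measure.map (X i) P = F) ∧
      (∃ c : ℝ, ∀ᵐ ω ∂P, ∑ i, X i ω = c) ∧ NOD P X ∧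
      (∀ π : Equiv.Perm (Fin n),
        Measure.map (fun ω => fun i => X (π i) ω) P
          = Measure.map (fun ω => fun i => X i ω) P) := by
  obtain ⟨Ω, _, P, _, X, hX, hF, ⟨c, hc⟩, hNL, hNU⟩ := h
  exact ⟨Ω × Equiv.Perm (Fin n), inferInstance, P.prod (uniformOn Set.univ), inferInstance,
    symmetrize X, measurable_symmetrize hX, map_symmetrize hX hF, ⟨c, ae_sum_symmetrize_eq hX hc⟩,
    ⟨hNL.symmetrize hX hF, hNU.symmetrize hX hF⟩, map_symmetrize_comp_perm hX⟩

/-- If `F` supports an NOD `n`-joint mix then `F` supports an exchangeable NOD `n`-joint mix. -/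
theorem stmt6 {n : ℕ} (F : Measure ℝ) [IsProbabilityMeasure F]
    (h : ∃ (Ω : Type) (_ : MeasurableSpace Ω) (P : Measure Ω) (_ : IsProbabilityMeasure P)
        (X : Fin n → Ω → ℝ),
      (∀ i, Measurable (X i)) ∧ (∀ i, Measure.map (X i) P = F) ∧
      (∃ c : ℝ, ∀ᵐ ω ∂P, ∑ i, X i ω = c) ∧ NOD P X) :
    ∃ (Ω : Type) (_ : MeasurableSpace Ω) (P : Measure Ω) (_ : IsProbabilityMeasure P)
        (X : Fin n → Ω → ℝ),
      (∀ i, Measurable (X i)) ∧ (∀ i, Measure.map (X i) P = F) ∧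
      (∃ c : ℝ, ∀ᵐ ω ∂P, ∑ i, X i ω = c) ∧ NOD P X ∧
      (∀ π : Equiv.Perm (Fin n),
        Measure.map (fun ω => fun i => X (π i) ω) P
          = Measure.map (fun ω => fun i => X i ω) P) :=
  stmt6_general F h
end

section
/- The distribution of any exchangeable joint mix with center μ is a mixture of distributions U_a, where a ∈ ℝⁿ with ∑_i a_i = μ and U_a is the uniform distribution over the n! permutations of a; each U_a is the law of an exchangeable negatively associated joint mix with center μ. -/
open MeasureTheory ProbabilityTheory

/-- `U_a`: the uniform distribution over the `n!` permutations of the vector `a`. -/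
noncomputable def Ua (n : ℕ) (a : Fin n → ℝ) : Measure (Fin n → ℝ) :=
  Measure.map (fun π : Equiv.Perm (Fin n) => fun i => a (π i)) (permMeasure n)

/-- Negative association of a law `ν` on `ℝⁿ`: any two monotone functions depending on
disjoint coordinate blocks are nonpositively correlated. -/
def NAMeasure {n : ℕ} (ν : Measure (Fin n → ℝ)) : Prop :=
  ∀ A B : Finset (Fin n), Disjoint A B →
    ∀ f g : (Fin n → ℝ) → ℝ, Measurable f → Measurable g → Monotone f → Monotone g →
      (∀ x y, (∀ i ∈ A, x i = y i) → f x = f y) →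
      (∀ x y, (∀ i ∈ B, x i = y i) → g x = g y) →
      MemLp f 2 ν → MemLp g 2 ν →
      ∫ x, f x * g x ∂ν - (∫ x, f x ∂ν) * (∫ x, g x ∂ν) ≤ 0

/-!
Mixing `U_a` over the law `G` of `X` applies a uniformly random coordinate permutation to a
sample of `G`; exchangeability makes `G` invariant under each permutation, so the mixture is `G`
itself, and `G` lives on `{∑ aᵢ = μ}` because `X` is a joint mix.

Negative association of `U_a` is proved by induction on the set `S` of permuted coordinates.
Split the permutations according to the position `j` that receives the largest entry `a i₀`.
Each fibre is a uniform permutation of the remaining coordinates, so the induction hypothesis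
applies there. Moving the largest entry into `A` can only increase `f`, so the fibre sums of `f`
are minimal at every `j ∉ A`, and likewise those of `g` at every `j ∉ B`. As `A` and `B` are
disjoint, the two fibre sums are oppositely ordered in `j`, and Chebyshev's sum inequality
combines the fibres.
-/

open Finset Function Equiv Equiv.Perm
open scoped Nat ENNReal

section Combinatorics

variable {α : Type*} [DecidableEq α] {S : Finset α} {σ : Perm α} {i i₀ j : α}

lemma mem_permsOfFinset_iff_forall_apply_eq : σ ∈ permsOfFinset S ↔ ∀ i ∉ S, σ i = i :=
  ⟨fun hσ _ hi => by_contra fun h => hi (mem_perms_of_finset_iff.1 hσ h),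
    fun h => mem_perms_of_finset_iff.2 fun hx => by_contra fun hxS => hx (h _ hxS)⟩

lemma apply_mem_of_mem_permsOfFinset (hσ : σ ∈ permsOfFinset S) (hi : i ∈ S) : σ i ∈ S := by
  by_contra h
  rw [σ.injective (mem_permsOfFinset_iff_forall_apply_eq.1 hσ _ h)] at h
  exact h hi

lemma permsOfFinset_empty : permsOfFinset (∅ : Finset α) = {1} := by
  ext σ
  simp only [mem_permsOfFinset_iff_forall_apply_eq, notMem_empty, not_false_eq_true, forall_const,
    mem_singleton]
  exact ⟨fun h => Perm.ext h, fun h _ => h ▸ rfl⟩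

lemma permsOfFinset_univ [Fintype α] : permsOfFinset (univ : Finset α) = univ :=
  eq_univ_of_forall fun _ =>
    mem_permsOfFinset_iff_forall_apply_eq.2 fun _ h => absurd (mem_univ _) h

lemma sum_filter_permsOfFinset_apply_eq {M : Type*} [AddCommMonoid M] (hi₀ : i₀ ∈ S)
    (hj : j ∈ S) (h : Perm α → M) :
    ∑ σ ∈ permsOfFinset S with σ j = i₀, h σ
      = ∑ τ ∈ permsOfFinset (S.erase j), h (swap j i₀ * τ) := by
  symm
  refine sum_nbij' (swap j i₀ * ·) (swap j i₀ * ·) ?_ ?_ (by simp [← mul_assoc])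
    (by simp [← mul_assoc]) fun _ _ => rfl
  · intro τ hτ
    simp only [mem_filter, mem_permsOfFinset_iff_forall_apply_eq] at hτ ⊢
    refine ⟨fun x hx => ?_, by simp [hτ j (notMem_erase j S)]⟩
    rw [mul_apply, hτ x (mt mem_of_mem_erase hx),
      swap_apply_of_ne_of_ne (ne_of_mem_of_not_mem hj hx).symm (ne_of_mem_of_not_mem hi₀ hx).symm]
  · intro σ hσ
    simp only [mem_filter, mem_permsOfFinset_iff_forall_apply_eq] at hσ ⊢
    intro x hx
    rcases eq_or_ne x j with rfl | hxj
    · simp [hσ.2]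
    · have hxS : x ∉ S := fun h => hx (mem_erase.2 ⟨hxj, h⟩)
      rw [mul_apply, hσ.1 x hxS, swap_apply_of_ne_of_ne hxj (ne_of_mem_of_not_mem hi₀ hxS).symm]

lemma sum_permsOfFinset_eq_sum_filter {M : Type*} [AddCommMonoid M] (hi₀ : i₀ ∈ S)
    (h : Perm α → M) :
    ∑ σ ∈ permsOfFinset S, h σ = ∑ j ∈ S, ∑ σ ∈ permsOfFinset S with σ j = i₀, h σ := by
  rw [← sum_fiberwise_of_maps_to (g := fun σ => σ.symm i₀) (t := S)]
  · simp_rw [symm_apply_eq, eq_comm (a := i₀)]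
  · intro σ hσ
    by_contra h
    have hfix := mem_permsOfFinset_iff_forall_apply_eq.1 hσ _ h
    rw [apply_symm_apply] at hfix
    exact h (hfix ▸ hi₀)

lemma sum_filter_permsOfFinset_apply_eq_le {a : α → ℝ} (hmax : ∀ i ∈ S, a i ≤ a i₀)
    {A : Set α} {f : (α → ℝ) → ℝ} (hf : Monotone f) (hfA : DependsOn f A) {j' : α}
    (hj : j ∈ S) (hj' : j' ∈ S) (hj'A : j' ∉ A) :
    ∑ σ ∈ permsOfFinset S with σ j' = i₀, f (a ∘ σ)
      ≤ ∑ σ ∈ permsOfFinset S with σ j = i₀, f (a ∘ σ) := by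
  have hswap : ∀ i ∉ S, swap j j' i = i := fun i hi =>
    swap_apply_of_ne_of_ne (ne_of_mem_of_not_mem hj hi).symm (ne_of_mem_of_not_mem hj' hi).symm
  calc ∑ σ ∈ permsOfFinset S with σ j' = i₀, f (a ∘ σ)
      ≤ ∑ σ ∈ permsOfFinset S with σ j' = i₀, f (a ∘ (σ * swap j j')) := by
        refine sum_le_sum fun σ hσ => ?_
        simp only [mem_filter, mem_permsOfFinset_iff_forall_apply_eq] at hσ
        calc f (a ∘ σ) ≤ f (update (a ∘ σ) j (a i₀)) := by
              refine hf (le_update_iff.2 ⟨hmax _ ?_, fun _ _ => le_rfl⟩)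
              exact apply_mem_of_mem_permsOfFinset
                (mem_permsOfFinset_iff_forall_apply_eq.2 hσ.1) hj
          _ = f (a ∘ (σ * swap j j')) := by
              refine hfA fun i hi => ?_
              rcases eq_or_ne i j with rfl | hij
              · simp [hσ.2]
              · have hij' : i ≠ j' := fun h => hj'A (h ▸ hi)
                simp [hij, swap_apply_of_ne_of_ne hij hij']
    _ = ∑ σ ∈ permsOfFinset S with σ j = i₀, f (a ∘ σ) := by
        refine sum_nbij' (· * swap j j') (· * swap j j') ?_ ?_ (by simp [mul_assoc])
          (by simp [mul_assoc]) fun _ _ => rfl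
        all_goals
          intro σ hσ
          simp only [mem_filter, mem_permsOfFinset_iff_forall_apply_eq] at hσ ⊢
          exact ⟨fun i hi => by simp [hswap i hi, hσ.1 i hi], by simp [hσ.2]⟩

theorem card_permsOfFinset_mul_sum_mul_le_sum_mul_sum (S : Finset α) (a : α → ℝ)
    {A B : Set α} (hAB : Disjoint A B) {f g : (α → ℝ) → ℝ} (hf : Monotone f) (hg : Monotone g)
    (hfA : DependsOn f A) (hgB : DependsOn g B) :
    (#(permsOfFinset S) : ℝ) * ∑ σ ∈ permsOfFinset S, f (a ∘ σ) * g (a ∘ σ)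
      ≤ (∑ σ ∈ permsOfFinset S, f (a ∘ σ)) * ∑ σ ∈ permsOfFinset S, g (a ∘ σ) := by
  induction S using Finset.strongInduction generalizing a with
  | H S ih =>
  obtain rfl | hS := S.eq_empty_or_nonempty
  · simp [permsOfFinset_empty]
  obtain ⟨i₀, hi₀, hmax⟩ := S.exists_max_image a hS
  let T (h : (α → ℝ) → ℝ) (j : α) : ℝ := ∑ σ ∈ permsOfFinset S with σ j = i₀, h (a ∘ σ)
  have hfiber : ∀ j ∈ S, ((#S - 1)! : ℝ) * T (f * g) j ≤ T f j * T g j := by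
    intro j hj
    have := ih (S.erase j) (erase_ssubset hj) (a ∘ swap j i₀)
    rw [card_perms_of_finset, card_erase_of_mem hj] at this
    simpa only [T, sum_filter_permsOfFinset_apply_eq hi₀ hj, coe_mul, comp_assoc, Pi.mul_apply]
      using this
  have hanti : AntivaryOn (T f) (T g) S := by
    intro j hj k hk hlt
    by_cases hkA : k ∈ A
    · exact absurd hlt (not_lt.2 <|
        sum_filter_permsOfFinset_apply_eq_le hmax hg hgB hj hk (hAB.notMem_of_mem_left hkA))
    · exact sum_filter_permsOfFinset_apply_eq_le hmax hf hfA hj hk hkA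
  calc (#(permsOfFinset S) : ℝ) * ∑ σ ∈ permsOfFinset S, f (a ∘ σ) * g (a ∘ σ)
      = #S * ∑ j ∈ S, ((#S - 1)! : ℝ) * T (f * g) j := by
        rw [card_perms_of_finset, sum_permsOfFinset_eq_sum_filter hi₀, ← mul_sum,
          ← Nat.mul_factorial_pred hS.card_pos.ne', Nat.cast_mul, mul_assoc]
        rfl
    _ ≤ #S * ∑ j ∈ S, T f j * T g j :=
        mul_le_mul_of_nonneg_left (sum_le_sum hfiber) (Nat.cast_nonneg _)
    _ ≤ (∑ j ∈ S, T f j) * ∑ j ∈ S, T g j := hanti.card_mul_sum_le_sum_mul_sum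
    _ = _ := by simp only [T, ← sum_permsOfFinset_eq_sum_filter hi₀]

end Combinatorics

theorem MeasureTheory.Measure.bind_map_eq_self {X H : Type*} [MeasurableSpace X]
    [MeasurableSpace H] {ν : Measure X} [SFinite ν] {ρ : Measure H} [IsProbabilityMeasure ρ]
    {Φ : X → H → X} (hΦ : Measurable (uncurry Φ)) (hν : ∀ h, ν.map (Φ · h) = ν) :
    ν.bind (fun x => ρ.map (Φ x)) = ν := by
  ext s hs
  have hs' : MeasurableSet (uncurry Φ ⁻¹' s) := hΦ hs
  have hmap : ∀ t, MeasurableSet t → ∀ x, ρ.map (Φ x) t = ρ (Prod.mk x ⁻¹' (uncurry Φ ⁻¹' t)) :=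
    fun t ht x => Measure.map_apply (hΦ.comp measurable_prodMk_left) ht
  have hkernel : Measurable fun x => ρ.map (Φ x) :=
    Measure.measurable_of_measurable_coe _ fun t ht => by
      simp_rw [hmap t ht]
      exact measurable_measure_prodMk_left (hΦ ht)
  calc ν.bind (fun x => ρ.map (Φ x)) s = ∫⁻ x, ρ (Prod.mk x ⁻¹' (uncurry Φ ⁻¹' s)) ∂ν := by
        simp_rw [Measure.bind_apply hs hkernel.aemeasurable, hmap s hs]
    _ = ∫⁻ h, ν ((fun x => (x, h)) ⁻¹' (uncurry Φ ⁻¹' s)) ∂ρ := by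
        rw [← Measure.prod_apply hs', Measure.prod_apply_symm hs']
    _ = ∫⁻ _, ν s ∂ρ := by
        refine lintegral_congr fun h => ?_
        have := Measure.map_apply (μ := ν) (f := fun x => Φ x h)
          (hΦ.comp measurable_prodMk_right) hs
        rwa [hν h, eq_comm] at this
    _ = ν s := by simp

lemma map_apply_setOf_sum_eq_one {Ω ι : Type*} [Fintype ι] [MeasurableSpace Ω] {P : Measure Ω}
    [IsProbabilityMeasure P] {Y : Ω → ι → ℝ} (hY : Measurable Y) {c : ℝ}
    (h : ∀ᵐ ω ∂P, ∑ i, Y ω i = c) : P.map Y {x | ∑ i, x i = c} = 1 := by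
  have hmeas : Measurable fun x : ι → ℝ => ∑ i, x i := by fun_prop
  have : IsProbabilityMeasure (P.map Y) := Measure.isProbabilityMeasure_map hY.aemeasurable
  exact (mem_ae_iff_prob_eq_one (hmeas (measurableSet_singleton c))).1
    ((ae_map_iff hY.aemeasurable (hmeas (measurableSet_singleton c))).2 h)

section UniformPermutation

variable {n : ℕ}

instance : DiscreteMeasurableSpace (Perm (Fin n)) := ⟨fun _ => trivial⟩

instance : IsProbabilityMeasure (permMeasure n) := by
  unfold permMeasure
  infer_instance

lemma permMeasure_singleton (σ : Perm (Fin n)) : permMeasure n {σ} = (n ! : ℝ≥0∞)⁻¹ := by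
  simp [permMeasure, PMF.uniformOfFintype_apply, Fintype.card_perm]

lemma map_permMeasure (e : Perm (Fin n) ≃ Perm (Fin n)) :
    (permMeasure n).map e = permMeasure n :=
  Measure.ext_iff_singleton.2 fun σ => by
    rw [Measure.map_apply .of_discrete (measurableSet_singleton σ), ← e.image_symm_eq_preimage,
      Set.image_singleton, permMeasure_singleton, permMeasure_singleton]

lemma integral_Ua (a : Fin n → ℝ) {h : (Fin n → ℝ) → ℝ} (hh : Measurable h) :
    ∫ x, h x ∂Ua n a = (n ! : ℝ)⁻¹ * ∑ σ : Perm (Fin n), h (a ∘ σ) := by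
  rw [Ua, integral_map Measurable.of_discrete.aemeasurable hh.aestronglyMeasurable, permMeasure,
    PMF.integral_eq_sum]
  simp [PMF.uniformOfFintype_apply, Fintype.card_perm, mul_sum, Function.comp_def]

lemma map_Ua_comp (a : Fin n → ℝ) (π : Perm (Fin n)) :
    (Ua n a).map (fun x i => x (π i)) = Ua n a := by
  rw [Ua, Measure.map_map (by fun_prop) .of_discrete]
  conv_rhs => rw [← map_permMeasure (Equiv.mulRight π),
    Measure.map_map .of_discrete .of_discrete]
  rfl

theorem naMeasure_Ua (a : Fin n → ℝ) : NAMeasure (Ua n a) := by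
  intro A B hAB f g hfm hgm hf hg hfA hgB _ _
  have key := card_permsOfFinset_mul_sum_mul_le_sum_mul_sum univ a (disjoint_coe.2 hAB) hf hg
    (fun x y h => hfA x y h) (fun x y h => hgB x y h)
  rw [permsOfFinset_univ, card_univ, Fintype.card_perm, Fintype.card_fin] at key
  rw [integral_Ua a (h := fun x => f x * g x) (hfm.mul hgm), integral_Ua a hfm, integral_Ua a hgm]
  calc _ = ((n ! : ℝ)⁻¹) ^ 2 * (n ! * ∑ σ : Perm (Fin n), f (a ∘ σ) * g (a ∘ σ)
          - (∑ σ : Perm (Fin n), f (a ∘ σ)) * ∑ σ : Perm (Fin n), g (a ∘ σ)) := by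
        field_simp
    _ ≤ 0 := mul_nonpos_of_nonneg_of_nonpos (sq_nonneg _) (sub_nonpos.2 key)

end UniformPermutation

/-- The law of an exchangeable joint mix with center `μc` is a mixture of the laws `U_a`,
`∑ a_i = μc`, each of which is the law of an exchangeable NA joint mix with center `μc`. -/
theorem stmt7 {Ω : Type*} [MeasurableSpace Ω] (P : Measure Ω) [IsProbabilityMeasure P]
    {n : ℕ} (X : Fin n → Ω → ℝ) (hmeas : ∀ i, Measurable (X i)) (μc : ℝ)
    (hJM : ∀ᵐ ω ∂P, ∑ i, X i ω = μc)
    (hexch : ∀ π : Equiv.Perm (Fin n),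
      Measure.map (fun ω i => X (π i) ω) P = Measure.map (fun ω i => X i ω) P) :
    (∃ G : Measure (Fin n → ℝ), IsProbabilityMeasure G ∧
      G {a | ∑ i, a i = μc} = 1 ∧
      Measure.map (fun ω i => X i ω) P = G.bind (fun a => Ua n a)) ∧
    (∀ a : Fin n → ℝ, ∑ i, a i = μc →
      (Ua n a) {x | ∑ i, x i = μc} = 1 ∧
      (∀ π : Equiv.Perm (Fin n), Measure.map (fun x i => x (π i)) (Ua n a) = Ua n a) ∧
      NAMeasure (Ua n a)) := by
  have hX : Measurable fun ω i => X i ω := measurable_pi_lambda _ hmeas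
  have hpermute : Measurable (uncurry fun (x : Fin n → ℝ) (π : Perm (Fin n)) i => x (π i)) :=
    measurable_from_prod_countable_left fun π =>
      measurable_pi_lambda _ fun i => measurable_pi_apply (π i)
  have hinvariant (π : Perm (Fin n)) :
      (P.map fun ω i => X i ω).map (fun x i => x (π i)) = P.map fun ω i => X i ω := by
    rw [Measure.map_map (by fun_prop) hX]
    exact hexch π
  refine ⟨⟨_, Measure.isProbabilityMeasure_map hX.aemeasurable,
      map_apply_setOf_sum_eq_one hX hJM, (Measure.bind_map_eq_self hpermute hinvariant).symm⟩,
    fun a ha => ⟨map_apply_setOf_sum_eq_one .of_discrete (.of_forall fun σ => ?_),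
      map_Ua_comp a, naMeasure_Ua a⟩⟩
  simpa [Equiv.sum_comp σ a] using ha
end

section
/- For n ≥ 3, a Gaussian random vector X ~ N_n(μ, Σ) is never counter-monotonic unless at least n − 2 of its components are degenerate (a.s. constant). -/
open MeasureTheory ProbabilityTheory

def IsGaussianVec {Ω : Type*} [MeasurableSpace Ω] (P : Measure Ω) {n : ℕ}
    (X : Fin n → Ω → ℝ) (μv : Fin n → ℝ) (S : Matrix (Fin n) (Fin n) ℝ) : Prop :=
  ∀ t : Fin n → ℝ, Measure.map (fun ω => ∑ i, t i * X i ω) P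
    = gaussianReal (∑ i, t i * μv i) (Real.toNNReal (∑ i, ∑ j, t i * S i j * t j))

/-!
A non-degenerate Gaussian coordinate exceeds its mean with probability exactly `1/2`. For a
counter-monotonic pair `(f Z, -g Z)` the events `{X i > μ i}` and `{X j > μ j}` are `{Z ∈ U}` and
`{Z ∈ L}` with `U` an upper and `L` a lower set, so they are either disjoint or cover `Ω`; since
their probabilities add up to `1`, they are a.s. disjoint in both cases. Three non-degenerate
coordinates would thus give three pairwise a.s. disjoint events of probability `1/2`.
-/

open Set

lemma gaussianReal_Ioi_self (μ : ℝ) {v : NNReal} (hv : v ≠ 0) :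
    gaussianReal μ v (Ioi μ) = 1 / 2 := by
  have hsymm : gaussianReal μ v (Ioi μ) = gaussianReal μ v (Iio μ) := by
    have hreflect := gaussianReal_map_const_sub (μ := μ) (v := v) (2 * μ)
    rw [two_mul, add_sub_cancel_right] at hreflect
    conv_lhs => rw [← hreflect]
    rw [Measure.map_apply (by fun_prop) measurableSet_Ioi]
    congr 1
    ext x
    simp only [mem_preimage, mem_Ioi, mem_Iio]
    constructor <;> intro h <;> linarith
  have hatom : gaussianReal μ v {μ} = 0 :=
    gaussianReal_absolutelyContinuous μ hv (measure_singleton μ)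
  have htotal : gaussianReal μ v (Iio μ) + gaussianReal μ v (Ioi μ) = 1 := by
    rw [← measure_union ((Iio_disjoint_Ici le_rfl).mono_right Ioi_subset_Ici_self)
      measurableSet_Ioi, Iio_union_Ioi, measure_compl (measurableSet_singleton μ)
      (measure_ne_top _ _), hatom, measure_univ, tsub_zero]
  rw [← hsymm, ← two_mul] at htotal
  exact (ENNReal.eq_div_iff two_ne_zero ENNReal.ofNat_ne_top).2 htotal

section

variable {Ω : Type*} [MeasurableSpace Ω] {P : Measure Ω}

lemma ae_eq_const_of_map_eq_dirac {X : Ω → ℝ} (hX : AEMeasurable X P) {c : ℝ}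
    (h : P.map X = Measure.dirac c) : ∀ᵐ ω ∂P, X ω = c :=
  ae_of_ae_map hX (p := (· = c)) (by rw [h, ae_dirac_eq]; exact rfl)

lemma measure_lt_eq_half_of_map_eq_gaussianReal [IsProbabilityMeasure P] {X : Ω → ℝ}
    (hX : AEMeasurable X P) {m : ℝ} {v : NNReal} (h : P.map X = gaussianReal m v)
    (hX_nonconst : ∀ c, ∃ᵐ ω ∂P, X ω ≠ c) : P {ω | m < X ω} = 1 / 2 := by
  have hv : v ≠ 0 := by
    rintro rfl
    rw [gaussianReal_zero_var] at h
    obtain ⟨ω, hne, heq⟩ :=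
      ((hX_nonconst m).and_eventually (ae_eq_const_of_map_eq_dirac hX h)).exists
    exact hne heq
  rw [← gaussianReal_Ioi_self m hv, ← h, Measure.map_apply_of_aemeasurable hX measurableSet_Ioi]
  rfl

lemma IsGaussianVec.map_coord_eq {n : ℕ} {X : Fin n → Ω → ℝ} {μv : Fin n → ℝ}
    {S : Matrix (Fin n) (Fin n) ℝ} (hG : IsGaussianVec P X μv S) (i : Fin n) :
    P.map (X i) = gaussianReal (μv i) (S i i).toNNReal := by
  simpa [Pi.single_apply, ite_mul, Finset.sum_ite_eq'] using hG (Pi.single i 1)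

lemma measure_inter_eq_zero_of_ae_eq_preimage {α : Type*} [LinearOrder α] [IsFiniteMeasure P]
    {A B : Set Ω} {Z : Ω → α} {U L : Set α} (hU : IsUpperSet U) (hL : IsLowerSet L)
    (hA : A =ᵐ[P] Z ⁻¹' U) (hB : B =ᵐ[P] Z ⁻¹' L) (hB_meas : NullMeasurableSet B P)
    (hAB : P A + P B ≤ P univ) : P (A ∩ B) = 0 := by
  -- an upper and a lower set of a linear order are either disjoint or cover it
  rcases hU.total hL.compl with hUL | hLU
  · rw [measure_congr (hA.inter hB), ← preimage_inter,
      (subset_compl_iff_disjoint_right.1 hUL).inter_eq, preimage_empty, measure_empty]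
  · have hunion : P (A ∪ B) = P univ := by
      rw [measure_congr (hA.union hB), ← preimage_union,
        union_comm U L, compl_subset_iff_union.1 hLU, preimage_univ]
    have hsum := measure_union_add_inter₀ A hB_meas
    rw [hunion] at hsum
    exact nonpos_iff_eq_zero.1 <| ENNReal.le_of_add_le_add_left (measure_ne_top P univ) <|
      by rw [add_zero, hsum]; exact hAB

lemma measure_inter_eq_zero_of_counterMonotone {α : Type*} [LinearOrder α] [IsFiniteMeasure P]
    {X Y : Ω → ℝ} (hY : AEMeasurable Y P) {Z : Ω → α} {f g : α → ℝ}
    (hf : Monotone f) (hg : Monotone g) (hXY : ∀ᵐ ω ∂P, X ω = f (Z ω) ∧ Y ω = -g (Z ω))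
    {a b : ℝ} (hab : P {ω | a < X ω} + P {ω | b < Y ω} ≤ P univ) :
    P ({ω | a < X ω} ∩ {ω | b < Y ω}) = 0 := by
  refine measure_inter_eq_zero_of_ae_eq_preimage (Z := Z) ((isUpperSet_Ioi a).preimage hf)
    ((isLowerSet_Iio (-b)).preimage hg) ?_ ?_ (nullMeasurableSet_lt aemeasurable_const hY) hab
  · filter_upwards [hXY] with ω h
    show (a < X ω) = (a < f (Z ω))
    rw [h.1]
  · filter_upwards [hXY] with ω h
    show (b < Y ω) = (g (Z ω) < -b)
    rw [h.2, lt_neg]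

lemma measure_add_add_le_one_of_aedisjoint [IsProbabilityMeasure P] {A B C : Set Ω}
    (hB : NullMeasurableSet B P) (hC : NullMeasurableSet C P)
    (hAB : AEDisjoint P A B) (hAC : AEDisjoint P A C) (hBC : AEDisjoint P B C) :
    P A + P B + P C ≤ 1 := by
  rw [← measure_union₀ hB hAB, ← measure_union₀ hC (hAC.union_left hBC)]
  exact prob_le_one

end

theorem stmt10_general {Ω : Type*} [MeasurableSpace Ω] (P : Measure Ω) [IsProbabilityMeasure P]
    {n : ℕ} (hn : 3 ≤ n) (X : Fin n → Ω → ℝ) (hmeas : ∀ i, Measurable (X i))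
    (μv : Fin n → ℝ) (S : Matrix (Fin n) (Fin n) ℝ)
    (hG : IsGaussianVec P X μv S)
    (hCT : ∀ i j, i ≠ j → ∃ (Z : Ω → ℝ) (f g : ℝ → ℝ), Measurable Z ∧
      Monotone f ∧ Monotone g ∧ ∀ᵐ ω ∂P, X i ω = f (Z ω) ∧ X j ω = -(g (Z ω))) :
    ∃ i j : Fin n, ∀ k, k ≠ i → k ≠ j → ∃ c : ℝ, ∀ᵐ ω ∂P, X k ω = c := by
  by_contra! hcon
  have hhalf : ∀ i, (∀ c, ∃ᵐ ω ∂P, X i ω ≠ c) → P {ω | μv i < X i ω} = 1 / 2 := fun i hi =>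
    measure_lt_eq_half_of_map_eq_gaussianReal (hmeas i).aemeasurable (hG.map_coord_eq i) hi
  have hdisj : ∀ i j, i ≠ j → (∀ c, ∃ᵐ ω ∂P, X i ω ≠ c) → (∀ c, ∃ᵐ ω ∂P, X j ω ≠ c) →
      AEDisjoint P {ω | μv i < X i ω} {ω | μv j < X j ω} := by
    intro i j hij hi hj
    obtain ⟨Z, f, g, -, hf, hg, hXY⟩ := hCT i j hij
    refine measure_inter_eq_zero_of_counterMonotone (hmeas j).aemeasurable hf hg hXY ?_
    rw [hhalf i hi, hhalf j hj, measure_univ, ENNReal.add_halves]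
  obtain ⟨i, -, -, hi⟩ := hcon ⟨0, by omega⟩ ⟨0, by omega⟩
  obtain ⟨j, hji, -, hj⟩ := hcon i i
  obtain ⟨k, hki, hkj, hk⟩ := hcon i j
  have hsum := measure_add_add_le_one_of_aedisjoint
    (measurableSet_lt measurable_const (hmeas j)).nullMeasurableSet
    (measurableSet_lt measurable_const (hmeas k)).nullMeasurableSet
    (hdisj i j hji.symm hi hj) (hdisj i k hki.symm hi hk) (hdisj j k hkj.symm hj hk)
  rw [hhalf i hi, hhalf j hj, hhalf k hk, ENNReal.add_halves] at hsum
  have : (1 : ENNReal) / 2 ≤ 0 :=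
    ENNReal.le_of_add_le_add_left ENNReal.one_ne_top (by rwa [add_zero])
  norm_num at this

/-- For `n ≥ 3`, a Gaussian vector is never counter-monotonic unless at least `n - 2`
of its components are degenerate (a.s. constant). -/
theorem stmt10 {Ω : Type*} [MeasurableSpace Ω] (P : Measure Ω) [IsProbabilityMeasure P]
    {n : ℕ} (hn : 3 ≤ n) (X : Fin n → Ω → ℝ) (hmeas : ∀ i, Measurable (X i))
    (μv : Fin n → ℝ) (S : Matrix (Fin n) (Fin n) ℝ) (hS : S.PosSemidef)
    (hG : IsGaussianVec P X μv S)
    (hCT : ∀ i j, i ≠ j → ∃ (Z : Ω → ℝ) (f g : ℝ → ℝ), Measurable Z ∧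
      Monotone f ∧ Monotone g ∧ ∀ᵐ ω ∂P, X i ω = f (Z ω) ∧ X j ω = -(g (Z ω))) :
    ∃ i j : Fin n, ∀ k, k ≠ i → k ≠ j → ∃ c : ℝ, ∀ᵐ ω ∂P, X k ω = c :=
  stmt10_general P hn X hmeas μv S hG hCT
end

section
/- Suppose F is an n-completely mixable distribution with finite variance and M is a symmetric set of probability measures on the power set of [n]. Then every joint mix X* with all marginals F and correlation matrix P_n* (diagonal 1, off-diagonal −1/(n−1)) minimizes sup_{μ∈M} ∑_{K⊆[n]} E[(∑_{i∈K} X_i)²] μ(K) over all random vectors (X_1,...,X_n) with X_i ~ F. -/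
/-!
Since `E[(∑_{i∈K} Z_i)²] = ∑_{a,b∈K} Cov(Z_a, Z_b) + (|K| E[F])²` for every coupling `Z`, only
covariance matrices matter. Averaging the covariance matrix of a coupling `Y` over all
permutations of the coordinates gives the matrix with diagonal `Var F` and off-diagonal entries
`(Var (∑ i, Y i) - n Var F) / (n (n - 1)) ≥ -Var F / (n - 1)`, which dominates `Var F • P_n*`
entrywise. Hence `E[(∑_{i∈K} X_i)²]` is at most the average of `E[(∑_{i∈π K} Y_i)²]` over
permutations `π`, and the symmetry of `M` turns this average into a lower bound for the supremum
attained by `Y`.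
-/

open MeasureTheory ProbabilityTheory

open Finset
open scoped Nat

theorem MulAction.card_nsmul_sum_smul_eq {G β M : Type*} [Group G] [Fintype G] [MulAction G β]
    [Fintype β] [MulAction.IsPretransitive G β] [AddCommMonoid M] (f : β → M) (x : β) :
    Fintype.card β • ∑ g : G, f (g • x) = Fintype.card G • ∑ y, f y := by
  have hconst : ∀ y : β, ∑ g : G, f (g • y) = ∑ g : G, f (g • x) := by
    intro y
    obtain ⟨h, rfl⟩ := MulAction.exists_smul_eq G x y
    simp_rw [smul_smul]
    exact Equiv.sum_comp (Equiv.mulRight h) fun g => f (g • x)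
  calc Fintype.card β • ∑ g : G, f (g • x) = ∑ y : β, ∑ g : G, f (g • y) := by
        simp [hconst]
    _ = ∑ g : G, ∑ y : β, f (g • y) := sum_comm
    _ = ∑ _g : G, ∑ y, f y :=
        sum_congr rfl fun g _ => Equiv.sum_comp (MulAction.toPerm g) f
    _ = Fintype.card G • ∑ y, f y := by simp

theorem Function.Embedding.sum_finTwo {ι M : Type*} [Fintype ι] [DecidableEq ι] [AddCommGroup M]
    (g : ι → ι → M) :
    ∑ e : Fin 2 ↪ ι, g (e 0) (e 1) = ∑ i, ∑ j, g i j - ∑ i, g i i := by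
  have h : ∑ e : Fin 2 ↪ ι, g (e 0) (e 1) = ∑ p : {p : ι × ι // p.1 ≠ p.2}, g p.1.1 p.1.2 :=
    Fintype.sum_equiv twoEmbeddingEquiv _ _ fun _ => rfl
  rw [h, ← sum_subtype (univ.filter fun p : ι × ι => p.1 ≠ p.2) (by simp) fun p => g p.1 p.2,
    sum_filter, Fintype.sum_prod_type]
  simp [sum_ite, ← ne_eq, filter_ne, sum_erase_eq_sub, sum_sub_distrib]

theorem Equiv.Perm.card_mul_pred_nsmul_sum_apply_apply {ι M : Type*} [Fintype ι] [DecidableEq ι]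
    [AddCommGroup M] (g : ι → ι → M) {a b : ι} (hab : a ≠ b) :
    (Fintype.card ι * (Fintype.card ι - 1)) • ∑ π : Perm ι, g (π a) (π b) =
      (Fintype.card ι)! • (∑ i, ∑ j, g i j - ∑ i, g i i) := by
  have := Equiv.Perm.isMultiplyPretransitive ι 2
  have h := MulAction.card_nsmul_sum_smul_eq (G := Perm ι) (fun e : Fin 2 ↪ ι => g (e 0) (e 1))
    (Function.Embedding.embFinTwo hab)
  rw [Fintype.card_embedding_eq, Fintype.card_perm, Function.Embedding.sum_finTwo] at h
  simpa [Function.Embedding.smul_apply, Function.Embedding.embFinTwo_apply_zero,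
    Function.Embedding.embFinTwo_apply_one, Nat.descFactorial, mul_comm] using h

theorem factorial_mul_le_sum_perm_apply_apply {ι : Type*} [Fintype ι] [DecidableEq ι]
    {c d : ι → ι → ℝ} {v : ℝ} (hc_diag : ∀ i, c i i = v)
    (hc_off : ∀ i j, i ≠ j → c i j = -v / (Fintype.card ι - 1))
    (hd_diag : ∀ i, d i i = v) (hd : 0 ≤ ∑ i, ∑ j, d i j) (a b : ι) :
    (Fintype.card ι)! * c a b ≤ ∑ π : Equiv.Perm ι, d (π a) (π b) := by
  rcases eq_or_ne a b with rfl | hab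
  · simp [hc_diag, hd_diag, Fintype.card_perm]
  have hn : 1 < Fintype.card ι := Fintype.one_lt_card_iff.mpr ⟨a, b, hab⟩
  have h := Equiv.Perm.card_mul_pred_nsmul_sum_apply_apply d hab
  simp only [nsmul_eq_mul, hd_diag, sum_const, Finset.card_univ] at h
  push_cast [Nat.cast_sub hn.le] at h
  rw [hc_off a b hab]
  replace hn : (1 : ℝ) < Fintype.card ι := by exact_mod_cast hn
  set n : ℝ := (Fintype.card ι : ℝ)
  have hpos : 0 < n * (n - 1) := by nlinarith
  refine le_of_mul_le_mul_left ?_ hpos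
  rw [h, show n * (n - 1) * ((Fintype.card ι)! * (-v / (n - 1))) =
    (Fintype.card ι)! * (-(n * v)) by field_simp [(by linarith : n - 1 ≠ 0)]]
  gcongr
  linarith

theorem integral_sq_finset_sum {Ω ι : Type*} [MeasurableSpace Ω] {P : Measure Ω}
    [IsProbabilityMeasure P] {Z : ι → Ω → ℝ} {K : Finset ι} (hZ : ∀ i ∈ K, MemLp (Z i) 2 P) :
    ∫ ω, (∑ i ∈ K, Z i ω) ^ 2 ∂P =
      ∑ a ∈ K, ∑ b ∈ K, cov[Z a, Z b; P] + (∑ i ∈ K, P[Z i]) ^ 2 := by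
  have hvar := variance_eq_sub (memLp_finsetSum' K hZ)
  rw [variance_sum' hZ] at hvar
  simp only [Pi.pow_apply, Finset.sum_apply] at hvar
  rw [integral_finsetSum K fun i hi => (hZ i hi).integrable one_le_two] at hvar
  linarith

theorem ProbabilityTheory.IdentDistrib.covariance_self {Ω Ω' : Type*} [MeasurableSpace Ω]
    [MeasurableSpace Ω'] {μ : Measure Ω} {ν : Measure Ω'} {f : Ω → ℝ} {g : Ω' → ℝ}
    (h : IdentDistrib f g μ ν) : cov[f, f; μ] = Var[g; ν] := by
  rw [ProbabilityTheory.covariance_self h.aemeasurable_fst, h.variance_eq]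

theorem factorial_mul_integral_sq_le_sum_perm {ι Ω Ω' : Type*} [Fintype ι] [DecidableEq ι]
    [MeasurableSpace Ω] [MeasurableSpace Ω'] {P : Measure Ω} {Q : Measure Ω'}
    [IsProbabilityMeasure P] [IsProbabilityMeasure Q] {F : Measure ℝ} (hF2 : MemLp id 2 F)
    {X : ι → Ω → ℝ} {Y : ι → Ω' → ℝ}
    (hX : ∀ i, IdentDistrib (X i) id P F) (hY : ∀ i, IdentDistrib (Y i) id Q F)
    (hcorr : ∀ i j, i ≠ j → cov[X i, X j; P] = -Var[id; F] / (Fintype.card ι - 1))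
    (K : Finset ι) :
    (Fintype.card ι)! * ∫ ω, (∑ i ∈ K, X i ω) ^ 2 ∂P ≤
      ∑ π : Equiv.Perm ι, ∫ ω, (∑ i ∈ K.image π, Y i ω) ^ 2 ∂Q := by
  have hXL2 : ∀ i, MemLp (X i) 2 P := fun i => (hX i).symm.memLp_snd hF2
  have hYL2 : ∀ i, MemLp (Y i) 2 Q := fun i => (hY i).symm.memLp_snd hF2
  have hsum_cov : 0 ≤ ∑ i, ∑ j, cov[Y i, Y j; Q] := variance_sum hYL2 ▸ variance_nonneg _ _
  have hcov := factorial_mul_le_sum_perm_apply_apply (fun i => (hX i).covariance_self) hcorr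
    (fun i => (hY i).covariance_self) hsum_cov
  simp only [sum_image fun _ _ _ _ h => Equiv.injective _ h]
  rw [integral_sq_finset_sum fun i _ => hXL2 i]
  simp only [integral_sq_finset_sum fun i _ => hYL2 _, (hX _).integral_eq, (hY _).integral_eq,
    sum_add_distrib, sum_const, Finset.card_univ, Fintype.card_perm, nsmul_eq_mul, mul_add]
  gcongr ?_ + _
  calc _ = ∑ a ∈ K, ∑ b ∈ K, (Fintype.card ι)! * cov[X a, X b; P] := by simp only [mul_sum]
    _ ≤ ∑ a ∈ K, ∑ b ∈ K, ∑ π : Equiv.Perm ι, cov[Y (π a), Y (π b); Q] := by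
        gcongr with a _ b _
        exact hcov a b
    _ = _ := (sum_congr rfl fun _ _ => sum_comm).trans sum_comm

theorem csSup_image_le_of_le_sum_perm {ι : Type*} [Fintype ι] [DecidableEq ι]
    {M : Set (Finset ι → ℝ)} (hM : ∀ w ∈ M, (∀ K, 0 ≤ w K) ∧ ∑ K, w K = 1)
    (hsym : ∀ w ∈ M, ∀ π : Equiv.Perm ι, (fun K => w (K.image π)) ∈ M) {s t : Finset ι → ℝ}
    (hst : ∀ K, (Fintype.card ι)! * s K ≤ ∑ π : Equiv.Perm ι, t (K.image π)) :
    sSup ((fun w => ∑ K, s K * w K) '' M) ≤ sSup ((fun w => ∑ K, t K * w K) '' M) := by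
  rcases M.eq_empty_or_nonempty with rfl | hne
  · simp
  set T := (fun w => ∑ K, t K * w K) '' M
  have hbdd : BddAbove T := by
    refine ⟨∑ K, |t K|, ?_⟩
    rintro _ ⟨w, hw, rfl⟩
    obtain ⟨hw0, hw1⟩ := hM w hw
    refine sum_le_sum fun K _ => ?_
    calc t K * w K ≤ |t K| * w K := mul_le_mul_of_nonneg_right (le_abs_self _) (hw0 K)
      _ ≤ |t K| * 1 := by gcongr; exact hw1 ▸ single_le_sum (fun K _ => hw0 K) (mem_univ K)
      _ = |t K| := mul_one _
  refine csSup_le (hne.image _) ?_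
  rintro _ ⟨w, hw, rfl⟩
  have hperm : ∀ π : Equiv.Perm ι, ∑ K, t (K.image π) * w K ≤ sSup T := fun π =>
    calc ∑ K, t (K.image π) * w K = ∑ K, t K * w (K.image ⇑π⁻¹) :=
          Fintype.sum_equiv (Equiv.finsetCongr π) _ _ fun K => by
            simp [map_eq_image, image_image]
      _ ≤ sSup T := le_csSup hbdd ⟨_, hsym w hw π⁻¹, rfl⟩
  refine le_of_mul_le_mul_left ?_ (by positivity : (0 : ℝ) < (Fintype.card ι)!)
  calc (Fintype.card ι)! * ∑ K, s K * w K = ∑ K, (Fintype.card ι)! * s K * w K := by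
        simp only [mul_sum, mul_assoc]
    _ ≤ ∑ K, (∑ π : Equiv.Perm ι, t (K.image π)) * w K :=
        sum_le_sum fun K _ => mul_le_mul_of_nonneg_right (hst K) ((hM w hw).1 K)
    _ = ∑ π : Equiv.Perm ι, ∑ K, t (K.image π) * w K := by simp only [sum_mul]; exact sum_comm
    _ ≤ ∑ _π : Equiv.Perm ι, sSup T := sum_le_sum fun π _ => hperm π
    _ = (Fintype.card ι)! * sSup T := by simp [Fintype.card_perm]

theorem stmt11_general {n : ℕ} (F : Measure ℝ)
    (hF2 : MemLp id 2 F)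
    (M : Set (Finset (Fin n) → ℝ))
    (hM : ∀ w ∈ M, (∀ K, 0 ≤ w K) ∧ ∑ K : Finset (Fin n), w K = 1)
    (hsym : ∀ w ∈ M, ∀ π : Equiv.Perm (Fin n), (fun K => w (K.image π)) ∈ M)
    {Ω : Type*} [MeasurableSpace Ω] (P : Measure Ω) [IsProbabilityMeasure P]
    (X : Fin n → Ω → ℝ) (hmX : ∀ i, Measurable (X i))
    (hmarg : ∀ i, Measure.map (X i) P = F)
    (hcorr : ∀ i j, i ≠ j → cov P (X i) (X j) = -(variance id F) / ((n : ℝ) - 1)) :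
    ∀ (Ω' : Type) (m' : MeasurableSpace Ω') (Q : Measure Ω'), IsProbabilityMeasure Q →
      ∀ Y : Fin n → Ω' → ℝ, (∀ i, Measurable (Y i)) → (∀ i, Measure.map (Y i) Q = F) →
      sSup ((fun w : Finset (Fin n) → ℝ =>
          ∑ K : Finset (Fin n), (∫ ω, (∑ i ∈ K, X i ω) ^ 2 ∂P) * w K) '' M) ≤
      sSup ((fun w : Finset (Fin n) → ℝ =>
          ∑ K : Finset (Fin n), (∫ ω', (∑ i ∈ K, Y i ω') ^ 2 ∂Q) * w K) '' M) := by
  intro Ω' _ Q _ Y hmY hmargY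
  have hXF : ∀ i, IdentDistrib (X i) id P F := fun i =>
    ⟨(hmX i).aemeasurable, aemeasurable_id, by rw [hmarg, Measure.map_id]⟩
  have hYF : ∀ i, IdentDistrib (Y i) id Q F := fun i =>
    ⟨(hmY i).aemeasurable, aemeasurable_id, by rw [hmargY, Measure.map_id]⟩
  exact csSup_image_le_of_le_sum_perm hM hsym fun K =>
    factorial_mul_integral_sq_le_sum_perm hF2 hXF hYF
      (fun i j hij => (hcorr i j hij).trans (by rw [Fintype.card_fin])) K

/-- For an `n`-completely mixable `F` with finite variance and a symmetric uncertainty set `M`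
of probability weights on subsets of `[n]`, every joint mix with marginals `F` and
correlation matrix `P_n*` (all pairwise covariances `-Var(F)/(n-1)`) minimizes
`sup_{μ∈M} ∑_K E[(∑_{i∈K} X_i)²] μ(K)` over all couplings with marginals `F`. -/
theorem stmt11 {n : ℕ} (hn : 2 ≤ n) (F : Measure ℝ) [IsProbabilityMeasure F]
    (hF2 : MemLp id 2 F)
    (M : Set (Finset (Fin n) → ℝ))
    (hM : ∀ w ∈ M, (∀ K, 0 ≤ w K) ∧ ∑ K : Finset (Fin n), w K = 1)
    (hsym : ∀ w ∈ M, ∀ π : Equiv.Perm (Fin n), (fun K => w (K.image π)) ∈ M)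
    {Ω : Type*} [MeasurableSpace Ω] (P : Measure Ω) [IsProbabilityMeasure P]
    (X : Fin n → Ω → ℝ) (hmX : ∀ i, Measurable (X i))
    (hmarg : ∀ i, Measure.map (X i) P = F)
    (c : ℝ) (hJM : ∀ᵐ ω ∂P, ∑ i, X i ω = c)
    (hcorr : ∀ i j, i ≠ j → cov P (X i) (X j) = -(variance id F) / ((n : ℝ) - 1)) :
    ∀ (Ω' : Type) (m' : MeasurableSpace Ω') (Q : Measure Ω'), IsProbabilityMeasure Q →
      ∀ Y : Fin n → Ω' → ℝ, (∀ i, Measurable (Y i)) → (∀ i, Measure.map (Y i) Q = F) →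
      sSup ((fun w : Finset (Fin n) → ℝ =>
          ∑ K : Finset (Fin n), (∫ ω, (∑ i ∈ K, X i ω) ^ 2 ∂P) * w K) '' M) ≤
      sSup ((fun w : Finset (Fin n) → ℝ =>
          ∑ K : Finset (Fin n), (∫ ω', (∑ i ∈ K, Y i ω') ^ 2 ∂Q) * w K) '' M) :=
  stmt11_general F hF2 M hM hsym P X hmX hmarg hcorr
end

section
/- Let n ≥ 3 and let F be n-completely mixable with mean 0 and finite positive variance. A random vector (X_1,...,X_n) with all marginals F minimizes max_{K⊆[n]} E[(∑_{i∈K} X_i)²] if and only if it is an NCD joint mix with correlation matrix P_n* (all pairwise correlations equal to −1/(n−1)). -/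
open MeasureTheory ProbabilityTheory

/-!
Write `c` for the matrix of second moments `E[X_i X_j]` of a coupling: its diagonal is
`σ² = Var F`, its total sum is `T = E[(∑ X_i)²] ≥ 0`, and `E[(∑_{i∈K} X_i)²]` is the block sum
of `c` over `K`. Averaging `c` over all relabellings by permutations gives a matrix with
diagonal `σ²` and off-diagonal entries `(T - nσ²)/(n(n-1))`; its block sum over a set of
size `⌈n/2⌉` is the minimax value `⌊n/2⌋⌈n/2⌉σ²/(n-1)` plus a nonnegative multiple of `T`.
Hence every coupling has a block sum at least the minimax value. A coupling whose covariances
all equal `-σ²/(n-1)` has block sums `|K|(n-|K|)σ²/(n-1)`, at most that value, and the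
permutation mixture of a joint mix is such a coupling. So a minimizer has all block sums at
most the minimax value; averaging then forces `T = 0` (a joint mix) and every block sum over
a `⌈n/2⌉`-set to equal the value, and exchanging one index of such a set shows that all
off-diagonal entries agree, hence equal `-σ²/(n-1)`.
-/

open Finset
open scoped ENNReal

noncomputable def minimaxValue (n : ℕ) (v : ℝ) : ℝ :=
  (n / 2 : ℕ) * ((n : ℝ) - (n / 2 : ℕ)) * v / ((n : ℝ) - 1)

lemma mul_sub_le_half_mul_sub_half (n k : ℕ) (hk : k ≤ n) :
    (k : ℝ) * (n - k) ≤ (n / 2 : ℕ) * ((n : ℝ) - (n / 2 : ℕ)) := by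
  have h₁ : ((2 * (n / 2) : ℕ) : ℝ) ≤ n := by exact_mod_cast Nat.mul_div_le n 2
  have h₂ : (n : ℝ) ≤ ((2 * (n / 2) + 1 : ℕ) : ℝ) := by
    exact_mod_cast (by omega : n ≤ 2 * (n / 2) + 1)
  have hk' : (k : ℝ) ≤ n := by exact_mod_cast hk
  push_cast at h₁ h₂
  -- with `m = n / 2`: `m (n - m) - k (n - k) = (m - k) (n - m - k)`, and no integer lies
  -- strictly between `m` and `n - m`
  rcases le_or_gt k (n / 2) with h | h
  · have h' : (k : ℝ) ≤ (n / 2 : ℕ) := by exact_mod_cast h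
    nlinarith
  · have h' : ((n / 2 : ℕ) : ℝ) + 1 ≤ k := by exact_mod_cast h
    nlinarith

lemma Finset.eq_zero_of_sum_eq_zero_of_card_eq {α M : Type*} [DecidableEq α] [AddCommGroup M]
    [IsAddTorsionFree M] {U : Finset α} {f : α → M} {r : ℕ} (hr : 0 < r) (hrU : r < #U ∨ r = 1)
    (h : ∀ B ⊆ U, #B = r → ∑ x ∈ B, f x = 0) : ∀ x ∈ U, f x = 0 := by
  intro x hx
  rcases hrU with hlt | rfl
  · have hconst : ∀ y ∈ U, f y = f x := by
      intro y hy
      obtain rfl | hyx := eq_or_ne y x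
      · rfl
      have hxy : x ∈ U.erase y := mem_erase.2 ⟨hyx.symm, hx⟩
      obtain ⟨t, ht, htc⟩ := exists_subset_card_eq (show r - 1 ≤ #((U.erase y).erase x) by
        rw [card_erase_of_mem hxy, card_erase_of_mem hy]; omega)
      have hxt : x ∉ t := fun h => by simpa using ht h
      have hyt : y ∉ t := fun h => by simpa using (mem_erase.1 (ht h)).2
      have htU : t ⊆ U := ht.trans ((erase_subset _ _).trans (erase_subset _ _))
      have hx' := h (insert x t) (insert_subset hx htU) (by rw [card_insert_of_notMem hxt]; omega)
      have hy' := h (insert y t) (insert_subset hy htU) (by rw [card_insert_of_notMem hyt]; omega)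
      rw [sum_insert hxt] at hx'
      rw [sum_insert hyt] at hy'
      exact add_right_cancel (hy'.trans hx'.symm)
    obtain ⟨B, hBU, hB⟩ := exists_subset_card_eq hlt.le
    have hsum := h B hBU hB
    rw [sum_congr rfl fun y hy => hconst y (hBU hy), sum_const, hB] at hsum
    exact (nsmul_eq_zero_iff_right hr.ne').1 hsum
  · simpa using h {x} (by simpa) (card_singleton x)

section BlockSum

variable {ι : Type*} {c : ι → ι → ℝ} {v : ℝ}

def blockSum (c : ι → ι → ℝ) (K : Finset ι) : ℝ :=
  ∑ i ∈ K, ∑ j ∈ K, c i j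

lemma blockSum_eq_of_apply_of_ne [DecidableEq ι] {ρ : ℝ} (hd : ∀ i, c i i = v)
    (hoff : ∀ i j, i ≠ j → c i j = ρ) (K : Finset ι) :
    blockSum c K = #K * v + #K * (#K - 1) * ρ := by
  have hrow : ∀ i ∈ K, ∑ j ∈ K, c i j = v + (#K - 1) * ρ := by
    intro i hi
    rw [← add_sum_erase _ _ hi, hd, sum_congr rfl fun j hj => hoff i j (ne_of_mem_erase hj).symm,
      sum_const, card_erase_of_mem hi, nsmul_eq_mul, Nat.cast_pred (card_pos.2 ⟨i, hi⟩)]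
  rw [blockSum, sum_congr rfl hrow, sum_const, nsmul_eq_mul]
  ring

lemma blockSum_insert [DecidableEq ι] (hsym : ∀ i j, c i j = c j i) {x : ι} {B : Finset ι}
    (hx : x ∉ B) :
    blockSum c (insert x B) = c x x + 2 * ∑ j ∈ B, c x j + blockSum c B := by
  simp only [blockSum, sum_insert hx, sum_add_distrib, hsym _ x]
  ring

lemma apply_eq_apply_of_ne_of_ne (hsym : ∀ i j, c i j = c j i)
    (hcol : ∀ a b p, a ≠ p → b ≠ p → c a p = c b p) {i j i' j' : ι} (hij : i ≠ j)
    (hij' : i' ≠ j') : c i j = c i' j' := by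
  obtain rfl | hjj' := eq_or_ne j j'
  · exact hcol i i' j hij hij'
  calc c i j = c j' j := hcol i j' j hij hjj'.symm
    _ = c j j' := hsym j' j
    _ = c i' j' := hcol j i' j' hjj' hij'

lemma exists_perm_apply_eq_apply_eq [DecidableEq ι] {a b i j : ι} (hab : a ≠ b) (hij : i ≠ j) :
    ∃ τ : Equiv.Perm ι, τ a = i ∧ τ b = j := by
  have hb : Equiv.swap a i b ≠ i := fun h =>
    hab ((Equiv.swap a i).injective (h.trans (Equiv.swap_apply_left a i).symm)).symm
  refine ⟨Equiv.swap (Equiv.swap a i b) j * Equiv.swap a i, ?_, ?_⟩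
  · simp only [Equiv.Perm.mul_apply, Equiv.swap_apply_left]
    exact Equiv.swap_apply_of_ne_of_ne hb.symm hij
  · simp only [Equiv.Perm.mul_apply, Equiv.swap_apply_left]

variable [Fintype ι] [DecidableEq ι]

lemma blockSum_le_minimaxValue (hn : 1 < Fintype.card ι) (hv : 0 ≤ v) (hd : ∀ i, c i i = v)
    (hoff : ∀ i j, i ≠ j → c i j = -v / (Fintype.card ι - 1)) (K : Finset ι) :
    blockSum c K ≤ minimaxValue (Fintype.card ι) v := by
  have hn' : (0 : ℝ) < Fintype.card ι - 1 := by
    rw [sub_pos]; exact_mod_cast hn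
  have hK : blockSum c K = #K * (Fintype.card ι - #K) * v / (Fintype.card ι - 1) := by
    rw [blockSum_eq_of_apply_of_ne hd hoff]
    field_simp
    ring
  rw [hK, minimaxValue]
  exact div_le_div_of_nonneg_right
    (mul_le_mul_of_nonneg_right (mul_sub_le_half_mul_sub_half _ _ (card_le_univ K)) hv) hn'.le

lemma apply_eq_apply_of_blockSum_eq {s : ℝ} {k : ℕ} (hd : ∀ i, c i i = v)
    (hsym : ∀ i j, c i j = c j i) (hk : 2 ≤ k) (hkn : k + 1 < Fintype.card ι ∨ k = 2)
    (hA : ∀ A : Finset ι, #A = k → blockSum c A = s) {a b p : ι} (hap : a ≠ p) (hbp : b ≠ p) :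
    c a p = c b p := by
  obtain rfl | hab := eq_or_ne a b
  · rfl
  set U := (univ.erase a).erase b
  have hbU : b ∈ univ.erase a := mem_erase.2 ⟨hab.symm, mem_univ b⟩
  have hU : #U = Fintype.card ι - 2 := by
    rw [card_erase_of_mem hbU, card_erase_of_mem (mem_univ a), card_univ]
    omega
  -- exchanging `a` and `b` in a `k`-set does not change its block sum
  have hexchange : ∀ B ⊆ U, #B = k - 1 → ∑ m ∈ B, (c a m - c b m) = 0 := by
    intro B hBU hB
    have haB : a ∉ B := fun h => by simpa [U] using hBU h
    have hbB : b ∉ B := fun h => by simpa [U] using hBU h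
    have ha := blockSum_insert hsym haB
    have hb := blockSum_insert hsym hbB
    rw [hA _ (by rw [card_insert_of_notMem haB]; omega), hd] at ha
    rw [hA _ (by rw [card_insert_of_notMem hbB]; omega), hd] at hb
    rw [sum_sub_distrib]
    linarith
  have hpU : p ∈ U := by simp [U, hap.symm, hbp.symm]
  exact sub_eq_zero.1 (eq_zero_of_sum_eq_zero_of_card_eq (by omega) (by omega) hexchange p hpU)

lemma sum_perm_apply_apply_eq {a b i j : ι} (hab : a ≠ b) (hij : i ≠ j) :
    ∑ π : Equiv.Perm ι, c (π i) (π j) = ∑ π : Equiv.Perm ι, c (π a) (π b) := by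
  obtain ⟨τ, rfl, rfl⟩ := exists_perm_apply_eq_apply_eq hab hij
  exact Equiv.sum_comp (Equiv.mulRight τ) fun π => c (π a) (π b)

noncomputable def permAverage (c : ι → ι → ℝ) (i j : ι) : ℝ :=
  (Fintype.card (Equiv.Perm ι) : ℝ)⁻¹ * ∑ π : Equiv.Perm ι, c (π i) (π j)

lemma permAverage_apply_self (hd : ∀ i, c i i = v) (i : ι) : permAverage c i i = v := by
  simp [permAverage, hd]

lemma permAverage_apply_of_ne (hd : ∀ i, c i i = v) {i j : ι} (hij : i ≠ j) :
    permAverage c i j =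
      (blockSum c univ - Fintype.card ι * v) / (Fintype.card ι * (Fintype.card ι - 1)) := by
  set N := (Fintype.card (Equiv.Perm ι) : ℝ)
  set n := Fintype.card ι
  have hn : 1 < n := Fintype.one_lt_card_iff.2 ⟨i, j, hij⟩
  -- count the off-diagonal entries of `∑ π, c (π p) (π q)` in two ways
  have hperm : ∀ π : Equiv.Perm ι,
      ∑ p, ∑ q ∈ univ.erase p, c (π p) (π q) = blockSum c univ - n * v := by
    intro π
    simp only [sum_erase_eq_sub (mem_univ _), hd, sum_sub_distrib, sum_const, card_univ,
      nsmul_eq_mul, blockSum, Equiv.sum_comp π (c (π _)), Equiv.sum_comp π fun p => ∑ q, c p q, n]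
  have hpairs : ∑ p, ∑ q ∈ univ.erase p, ∑ π : Equiv.Perm ι, c (π p) (π q) =
      n * (n - 1) * ∑ π : Equiv.Perm ι, c (π i) (π j) := by
    rw [sum_congr rfl fun p _ => sum_congr rfl fun q hq =>
      sum_perm_apply_apply_eq (c := c) hij (ne_of_mem_erase hq).symm]
    simp only [sum_const, card_erase_of_mem (mem_univ _), card_univ, nsmul_eq_mul,
      Nat.cast_pred (by omega : 0 < n), n]
    ring
  have hswap : ∑ p, ∑ q ∈ univ.erase p, ∑ π : Equiv.Perm ι, c (π p) (π q) =
      N * (blockSum c univ - n * v) := by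
    rw [sum_congr rfl fun p _ => sum_comm, sum_comm, sum_congr rfl fun π _ => hperm π]
    simp [N, mul_sub]
  have hN : N ≠ 0 := Nat.cast_ne_zero.2 Fintype.card_ne_zero
  have hn' : (1 : ℝ) < n := by exact_mod_cast hn
  rw [permAverage, eq_div_iff (by nlinarith)]
  field_simp
  linear_combination hpairs.symm.trans hswap

lemma blockSum_permAverage (K : Finset ι) :
    blockSum (permAverage c) K =
      (Fintype.card (Equiv.Perm ι) : ℝ)⁻¹ * ∑ π : Equiv.Perm ι, blockSum c (K.image π) := by
  have himage : ∀ π : Equiv.Perm ι, blockSum c (K.image π) = ∑ i ∈ K, ∑ j ∈ K, c (π i) (π j) := by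
    intro π
    simp only [blockSum, sum_image fun _ _ _ _ h => π.injective h]
  rw [sum_congr rfl fun π _ => himage π]
  simp only [blockSum, permAverage, mul_sum]
  rw [sum_comm (s := (univ : Finset (Equiv.Perm ι)))]
  exact sum_congr rfl fun i _ => sum_comm

lemma blockSum_permAverage_of_card_eq (hn : 1 < Fintype.card ι) (hd : ∀ i, c i i = v)
    {K : Finset ι} (hK : #K = Fintype.card ι - Fintype.card ι / 2) :
    blockSum (permAverage c) K = minimaxValue (Fintype.card ι) v +
      #K * (#K - 1) * blockSum c univ / (Fintype.card ι * (Fintype.card ι - 1)) := by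
  have hn' : (1 : ℝ) < Fintype.card ι := by exact_mod_cast hn
  have hK' : (#K : ℝ) = Fintype.card ι - (Fintype.card ι / 2 : ℕ) := by
    rw [hK, Nat.cast_sub (Nat.div_le_self _ 2)]
  rw [blockSum_eq_of_apply_of_ne (permAverage_apply_self hd) fun i j => permAverage_apply_of_ne hd,
    minimaxValue, hK']
  have : (Fintype.card ι : ℝ) - 1 ≠ 0 := by linarith
  field_simp
  ring

lemma exists_minimaxValue_le_blockSum (hn : 1 < Fintype.card ι) (hd : ∀ i, c i i = v)
    (hT : 0 ≤ blockSum c univ) : ∃ K, minimaxValue (Fintype.card ι) v ≤ blockSum c K := by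
  obtain ⟨K, -, hK⟩ := exists_subset_card_eq (s := (univ : Finset ι))
    (n := Fintype.card ι - Fintype.card ι / 2) (by simp)
  have hk : (1 : ℝ) ≤ #K := by exact_mod_cast (by omega : 1 ≤ #K)
  have hn' : (1 : ℝ) < Fintype.card ι := by exact_mod_cast hn
  have havg : minimaxValue (Fintype.card ι) v ≤ blockSum (permAverage c) K := by
    rw [blockSum_permAverage_of_card_eq hn hd hK, le_add_iff_nonneg_right]
    have hk₀ : (0 : ℝ) ≤ #K - 1 := by linarith
    have hn₀ : (0 : ℝ) ≤ (Fintype.card ι : ℝ) - 1 := by linarith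
    positivity
  rw [blockSum_permAverage, le_inv_mul_iff₀ (by positivity), ← card_univ, ← nsmul_eq_mul,
    ← sum_const] at havg
  obtain ⟨π, -, hπ⟩ := exists_le_of_sum_le univ_nonempty havg
  exact ⟨K.image π, hπ⟩

lemma blockSum_eq_minimaxValue_of_forall_le (hn : 3 ≤ Fintype.card ι) (hd : ∀ i, c i i = v)
    (hT : 0 ≤ blockSum c univ) (hle : ∀ K, blockSum c K ≤ minimaxValue (Fintype.card ι) v) :
    blockSum c univ = 0 ∧ ∀ K : Finset ι, #K = Fintype.card ι - Fintype.card ι / 2 →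
      blockSum c K = minimaxValue (Fintype.card ι) v := by
  have hN : (0 : ℝ) < Fintype.card (Equiv.Perm ι) := Nat.cast_pos.2 Fintype.card_pos
  have havg : ∀ K, blockSum (permAverage c) K ≤ minimaxValue (Fintype.card ι) v := by
    intro K
    rw [blockSum_permAverage, inv_mul_le_iff₀ hN, ← card_univ, ← nsmul_eq_mul, ← sum_const]
    exact sum_le_sum fun π _ => hle _
  obtain ⟨K, -, hK⟩ := exists_subset_card_eq (s := (univ : Finset ι))
    (n := Fintype.card ι - Fintype.card ι / 2) (by simp)
  have hT0 : blockSum c univ = 0 := by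
    have hk : (2 : ℝ) ≤ #K := by exact_mod_cast (by omega : 2 ≤ #K)
    have hn' : (3 : ℝ) ≤ Fintype.card ι := by exact_mod_cast hn
    have h := havg K
    rw [blockSum_permAverage_of_card_eq (by omega) hd hK, add_le_iff_nonpos_right,
      div_le_iff₀ (by nlinarith), zero_mul] at h
    have hkk : (0 : ℝ) < #K * (#K - 1) := by nlinarith
    exact le_antisymm (nonpos_of_mul_nonpos_right (by linarith) hkk) hT
  refine ⟨hT0, fun A hA => ?_⟩
  have hA' := blockSum_permAverage_of_card_eq (by omega) hd hA
  rw [hT0, mul_zero, zero_div, add_zero, blockSum_permAverage, inv_mul_eq_iff_eq_mul₀ hN.ne',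
    ← card_univ, ← nsmul_eq_mul, ← sum_const] at hA'
  simpa using
    (sum_eq_sum_iff_of_le fun (π : Equiv.Perm ι) _ => hle (A.image π)).1 hA' 1 (mem_univ _)

lemma apply_eq_of_forall_blockSum_le (hn : 3 ≤ Fintype.card ι) (hd : ∀ i, c i i = v)
    (hsym : ∀ i j, c i j = c j i) (hT : 0 ≤ blockSum c univ)
    (hle : ∀ K, blockSum c K ≤ minimaxValue (Fintype.card ι) v)
    {i j : ι} (hij : i ≠ j) : c i j = -v / (Fintype.card ι - 1) := by
  obtain ⟨hT0, hA⟩ := blockSum_eq_minimaxValue_of_forall_le hn hd hT hle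
  have hoff : ∀ i' j', i' ≠ j' → c i' j' = c i j := fun i' j' hij' =>
    apply_eq_apply_of_ne_of_ne hsym
      (fun a b p => apply_eq_apply_of_blockSum_eq hd hsym (by omega) (by omega) hA) hij' hij
  have hn' : (3 : ℝ) ≤ Fintype.card ι := by exact_mod_cast hn
  rw [blockSum_eq_of_apply_of_ne hd hoff, card_univ] at hT0
  rw [eq_div_iff (by linarith)]
  nlinarith

end BlockSum

section SecondMoments

variable {Ω ι : Type*} [MeasurableSpace Ω] {P : Measure Ω} {F : Measure ℝ} {Y : ι → Ω → ℝ}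

noncomputable def secondMoments (P : Measure Ω) (Y : ι → Ω → ℝ) (i j : ι) : ℝ :=
  ∫ ω, Y i ω * Y j ω ∂P

lemma secondMoments_comm (P : Measure Ω) (Y : ι → Ω → ℝ) (i j : ι) :
    secondMoments P Y i j = secondMoments P Y j i := by
  simp only [secondMoments, mul_comm]

lemma memLp_two_of_map_eq (hF2 : MemLp id 2 F) {g : Ω → ℝ} (hg : Measurable g)
    (h : P.map g = F) : MemLp g 2 P :=
  (h ▸ hF2 : MemLp id 2 (P.map g)).comp_of_map hg.aemeasurable

lemma integral_eq_zero_of_map_eq (hmean : ∫ x, x ∂F = 0) {g : Ω → ℝ} (hg : Measurable g)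
    (h : P.map g = F) : ∫ ω, g ω ∂P = 0 := by
  rw [← hmean, ← h, integral_map (f := fun x : ℝ => x) hg.aemeasurable aestronglyMeasurable_id]

lemma integral_sq_of_map_eq (hmean : ∫ x, x ∂F = 0) {g : Ω → ℝ} (hg : Measurable g)
    (h : P.map g = F) : ∫ ω, g ω ^ 2 ∂P = variance id F := by
  rw [variance_of_integral_eq_zero aemeasurable_id (by simpa using hmean), ← h,
    integral_map hg.aemeasurable (by fun_prop)]
  rfl

lemma secondMoments_self (hmean : ∫ x, x ∂F = 0) (hmY : ∀ i, Measurable (Y i))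
    (hmarg : ∀ i, P.map (Y i) = F) (i : ι) : secondMoments P Y i i = variance id F := by
  simp only [secondMoments, ← sq]
  exact integral_sq_of_map_eq hmean (hmY i) (hmarg i)

lemma integrable_mul_of_map_eq (hF2 : MemLp id 2 F) (hmY : ∀ i, Measurable (Y i))
    (hmarg : ∀ i, P.map (Y i) = F) (i j : ι) : Integrable (fun ω => Y i ω * Y j ω) P :=
  (memLp_two_of_map_eq hF2 (hmY i) (hmarg i)).integrable_mul
    (memLp_two_of_map_eq hF2 (hmY j) (hmarg j))

lemma integral_sq_sum_eq_blockSum (hF2 : MemLp id 2 F) (hmY : ∀ i, Measurable (Y i))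
    (hmarg : ∀ i, P.map (Y i) = F) (K : Finset ι) :
    ∫ ω, (∑ i ∈ K, Y i ω) ^ 2 ∂P = blockSum (secondMoments P Y) K := by
  have hint := integrable_mul_of_map_eq hF2 hmY hmarg
  simp_rw [sq, sum_mul_sum]
  rw [integral_finsetSum _ fun i _ => integrable_finsetSum _ fun j _ => hint i j]
  exact sum_congr rfl fun i _ => integral_finsetSum _ fun j _ => hint i j

lemma blockSum_secondMoments_nonneg (hF2 : MemLp id 2 F) (hmY : ∀ i, Measurable (Y i))
    (hmarg : ∀ i, P.map (Y i) = F) (K : Finset ι) : 0 ≤ blockSum (secondMoments P Y) K := by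
  rw [← integral_sq_sum_eq_blockSum hF2 hmY hmarg]
  exact integral_nonneg fun ω => sq_nonneg _

lemma exists_ae_sum_eq_iff_blockSum_eq_zero [Fintype ι] [IsProbabilityMeasure P]
    (hF2 : MemLp id 2 F) (hmean : ∫ x, x ∂F = 0) (hmY : ∀ i, Measurable (Y i))
    (hmarg : ∀ i, P.map (Y i) = F) :
    (∃ c, ∀ᵐ ω ∂P, ∑ i, Y i ω = c) ↔ blockSum (secondMoments P Y) univ = 0 := by
  have hL2 : ∀ i, MemLp (Y i) 2 P := fun i => memLp_two_of_map_eq hF2 (hmY i) (hmarg i)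
  rw [← integral_sq_sum_eq_blockSum hF2 hmY hmarg, integral_eq_zero_iff_of_nonneg
    (fun ω => sq_nonneg _) (memLp_finsetSum univ fun i _ => hL2 i).integrable_sq]
  constructor
  · rintro ⟨c, hc⟩
    have hc0 : c = 0 := by
      have hsum := integral_congr_ae hc
      rw [integral_finsetSum _ fun i _ => (hL2 i).integrable one_le_two,
        sum_eq_zero fun i _ => integral_eq_zero_of_map_eq hmean (hmY i) (hmarg i)] at hsum
      simpa using hsum.symm
    filter_upwards [hc] with ω hω
    simp [hω, hc0]
  · intro h
    exact ⟨0, by filter_upwards [h] with ω hω; simpa using hω⟩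

lemma cov_eq_secondMoments (hmean : ∫ x, x ∂F = 0) (hmY : ∀ i, Measurable (Y i))
    (hmarg : ∀ i, P.map (Y i) = F) (i j : ι) : cov P (Y i) (Y j) = secondMoments P Y i j := by
  simp only [cov, secondMoments, integral_eq_zero_of_map_eq hmean (hmY _) (hmarg _), sub_zero]

end SecondMoments

lemma measurable_pi_comp_perm {Ω ι : Type*} [MeasurableSpace Ω] {Z : ι → Ω → ℝ}
    (hmZ : ∀ i, Measurable (Z i)) (π : Equiv.Perm ι) : Measurable fun ω i => Z (π i) ω :=
  measurable_pi_lambda _ fun i => hmZ (π i)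

section PermMixture

variable {Ω ι : Type*} [MeasurableSpace Ω] [Fintype ι] [DecidableEq ι] {P : Measure Ω}
  {F : Measure ℝ} {Z : ι → Ω → ℝ}

-- the law of `(Z (π i))ᵢ` for a uniformly random permutation `π` independent of `Z`
noncomputable def permMixture (P : Measure Ω) (Z : ι → Ω → ℝ) : Measure (ι → ℝ) :=
  ∑ π : Equiv.Perm ι, (Fintype.card (Equiv.Perm ι) : ℝ≥0∞)⁻¹ • P.map fun ω i => Z (π i) ω

lemma isProbabilityMeasure_permMixture [IsProbabilityMeasure P] (hmZ : ∀ i, Measurable (Z i)) :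
    IsProbabilityMeasure (permMixture P Z) := by
  constructor
  simp only [permMixture, Measure.coe_finsetSum, Measure.smul_apply, Finset.sum_apply,
    Measure.map_apply (measurable_pi_comp_perm hmZ _) MeasurableSet.univ, Set.preimage_univ,
    measure_univ, smul_eq_mul, mul_one, sum_const, card_univ, nsmul_eq_mul]
  exact ENNReal.mul_inv_cancel (Nat.cast_ne_zero.2 Fintype.card_ne_zero) (ENNReal.natCast_ne_top _)

lemma map_eval_permMixture (hmZ : ∀ i, Measurable (Z i)) (hmarg : ∀ i, P.map (Z i) = F)
    (i : ι) : (permMixture P Z).map (fun y => y i) = F := by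
  rw [permMixture, ← Measure.mapₗ_apply_of_measurable (measurable_pi_apply i), map_sum]
  have hπ : ∀ π : Equiv.Perm ι, (P.map fun ω i => Z (π i) ω).map (fun y => y i) = F := fun π => by
    rw [Measure.map_map (measurable_pi_apply i) (measurable_pi_comp_perm hmZ π)]
    exact hmarg (π i)
  simp only [Measure.mapₗ_apply_of_measurable (measurable_pi_apply i), Measure.map_smul, hπ,
    sum_const, card_univ]
  rw [← Nat.cast_smul_eq_nsmul ℝ≥0∞, smul_smul,
    ENNReal.mul_inv_cancel (Nat.cast_ne_zero.2 Fintype.card_ne_zero) (ENNReal.natCast_ne_top _),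
    one_smul]

lemma integral_permMixture (hmZ : ∀ i, Measurable (Z i)) {φ : (ι → ℝ) → ℝ} (hφ : Measurable φ)
    (hint : ∀ π : Equiv.Perm ι, Integrable (fun ω => φ fun i => Z (π i) ω) P) :
    ∫ y, φ y ∂permMixture P Z =
      (Fintype.card (Equiv.Perm ι) : ℝ)⁻¹ * ∑ π : Equiv.Perm ι, ∫ ω, φ (fun i => Z (π i) ω) ∂P := by
  rw [permMixture, integral_finsetSum_measure fun π _ => ?_, mul_sum]
  · refine sum_congr rfl fun π _ => ?_
    rw [integral_smul_measure, integral_map (measurable_pi_comp_perm hmZ π).aemeasurable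
      hφ.aestronglyMeasurable, ENNReal.toReal_inv, ENNReal.toReal_natCast, smul_eq_mul]
  · exact ((integrable_map_measure hφ.aestronglyMeasurable
      (measurable_pi_comp_perm hmZ π).aemeasurable).2 (hint π)).smul_measure
      (ENNReal.inv_ne_top.2 (Nat.cast_ne_zero.2 Fintype.card_ne_zero))

lemma secondMoments_permMixture (hF2 : MemLp id 2 F) (hmZ : ∀ i, Measurable (Z i))
    (hmarg : ∀ i, P.map (Z i) = F) :
    secondMoments (permMixture P Z) (fun i y => y i) = permAverage (secondMoments P Z) := by
  ext i j
  rw [secondMoments, integral_permMixture (φ := fun y => y i * y j) hmZ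
    ((measurable_pi_apply i).mul (measurable_pi_apply j))
    fun π => integrable_mul_of_map_eq hF2 hmZ hmarg (π i) (π j)]
  rfl

lemma blockSum_secondMoments_permMixture_le [IsProbabilityMeasure P] (hn : 1 < Fintype.card ι)
    (hF2 : MemLp id 2 F) (hmean : ∫ x, x ∂F = 0) (hmZ : ∀ i, Measurable (Z i))
    (hmarg : ∀ i, P.map (Z i) = F) (hmix : ∃ c, ∀ᵐ ω ∂P, ∑ i, Z i ω = c) (K : Finset ι) :
    blockSum (secondMoments (permMixture P Z) fun i y => y i) K ≤
      minimaxValue (Fintype.card ι) (variance id F) := by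
  have hd := secondMoments_self hmean hmZ hmarg
  have hT := (exists_ae_sum_eq_iff_blockSum_eq_zero hF2 hmean hmZ hmarg).1 hmix
  have hn' : (1 : ℝ) < Fintype.card ι := by exact_mod_cast hn
  rw [secondMoments_permMixture hF2 hmZ hmarg]
  refine blockSum_le_minimaxValue hn (variance_nonneg _ _) (permAverage_apply_self hd)
    (fun i j hij => ?_) K
  rw [permAverage_apply_of_ne hd hij, hT]
  field_simp
  ring

end PermMixture

theorem stmt12_general {n : ℕ} (hn : 3 ≤ n) (F : Measure ℝ)
    (hF2 : MemLp id 2 F) (hmean : ∫ x, x ∂F = 0)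
    (hCM : ∃ (Ω0 : Type) (_ : MeasurableSpace Ω0) (P0 : Measure Ω0)
        (_ : IsProbabilityMeasure P0) (Z : Fin n → Ω0 → ℝ),
      (∀ i, Measurable (Z i)) ∧ (∀ i, Measure.map (Z i) P0 = F) ∧
      ∃ c : ℝ, ∀ᵐ ω ∂P0, ∑ i, Z i ω = c)
    {Ω : Type*} [MeasurableSpace Ω] (P : Measure Ω) [IsProbabilityMeasure P]
    (X : Fin n → Ω → ℝ) (hmX : ∀ i, Measurable (X i))
    (hmarg : ∀ i, Measure.map (X i) P = F) :
    (∀ (Ω' : Type) (m' : MeasurableSpace Ω') (Q : Measure Ω'), IsProbabilityMeasure Q →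
        ∀ Y : Fin n → Ω' → ℝ, (∀ i, Measurable (Y i)) →
        (∀ i, Measure.map (Y i) Q = F) →
        sSup (Set.range fun K : Finset (Fin n) => ∫ ω, (∑ i ∈ K, X i ω) ^ 2 ∂P) ≤
        sSup (Set.range fun K : Finset (Fin n) => ∫ ω', (∑ i ∈ K, Y i ω') ^ 2 ∂Q))
    ↔ ((∃ c : ℝ, ∀ᵐ ω ∂P, ∑ i, X i ω = c) ∧
        ∀ i j, i ≠ j → cov P (X i) (X j) = -(variance id F) / ((n : ℝ) - 1)) := by
  have hn' : 3 ≤ Fintype.card (Fin n) := by simpa using hn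
  have hd := secondMoments_self hmean hmX hmarg
  have hT := blockSum_secondMoments_nonneg hF2 hmX hmarg univ
  simp only [integral_sq_sum_eq_blockSum hF2 hmX hmarg, cov_eq_secondMoments hmean hmX hmarg,
    exists_ae_sum_eq_iff_blockSum_eq_zero hF2 hmean hmX hmarg]
  constructor
  · intro hmin
    obtain ⟨Ω0, _, P0, _, Z, hmZ, hmargZ, hmix⟩ := hCM
    have hQ := hmin _ _ _ (isProbabilityMeasure_permMixture hmZ) _ measurable_pi_apply
      (map_eval_permMixture hmZ hmargZ)
    simp only [integral_sq_sum_eq_blockSum hF2 measurable_pi_apply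
      (map_eval_permMixture hmZ hmargZ)] at hQ
    have hle : ∀ K, blockSum (secondMoments P X) K ≤
        minimaxValue (Fintype.card (Fin n)) (variance id F) :=
      fun K => ((le_csSup (Set.finite_range _).bddAbove ⟨K, rfl⟩).trans hQ).trans
        (csSup_le (Set.range_nonempty _) (Set.forall_mem_range.2
          (blockSum_secondMoments_permMixture_le (by omega) hF2 hmean hmZ hmargZ hmix)))
    refine ⟨(blockSum_eq_minimaxValue_of_forall_le hn' hd hT hle).1, fun i j hij => ?_⟩
    simpa using apply_eq_of_forall_blockSum_le hn' hd (secondMoments_comm P X) hT hle hij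
  · rintro ⟨-, hoff⟩ Ω' _ Q _ Y hmY hmargY
    simp only [integral_sq_sum_eq_blockSum hF2 hmY hmargY]
    obtain ⟨K, hK⟩ := exists_minimaxValue_le_blockSum (by omega)
      (secondMoments_self hmean hmY hmargY) (blockSum_secondMoments_nonneg hF2 hmY hmargY univ)
    refine (csSup_le (Set.range_nonempty _) (Set.forall_mem_range.2 fun K' => ?_)).trans
      (hK.trans (le_csSup (Set.finite_range _).bddAbove ⟨K, rfl⟩))
    exact blockSum_le_minimaxValue (by omega) (variance_nonneg _ _) hd (by simpa using hoff) K'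

/-- Let `n ≥ 3` and `F` be `n`-completely mixable with mean `0` and finite positive variance.
A coupling with marginals `F` minimizes `max_{K⊆[n]} E[(∑_{i∈K} X_i)²]` over all couplings
iff it is an NCD joint mix with correlation matrix `P_n*` (all pairwise covariances
equal to `-Var(F)/(n-1)`). -/
theorem stmt12 {n : ℕ} (hn : 3 ≤ n) (F : Measure ℝ) [IsProbabilityMeasure F]
    (hF2 : MemLp id 2 F) (hmean : ∫ x, x ∂F = 0) (hvarpos : 0 < variance id F)
    (hCM : ∃ (Ω0 : Type) (_ : MeasurableSpace Ω0) (P0 : Measure Ω0)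
        (_ : IsProbabilityMeasure P0) (Z : Fin n → Ω0 → ℝ),
      (∀ i, Measurable (Z i)) ∧ (∀ i, Measure.map (Z i) P0 = F) ∧
      ∃ c : ℝ, ∀ᵐ ω ∂P0, ∑ i, Z i ω = c)
    {Ω : Type*} [MeasurableSpace Ω] (P : Measure Ω) [IsProbabilityMeasure P]
    (X : Fin n → Ω → ℝ) (hmX : ∀ i, Measurable (X i))
    (hmarg : ∀ i, Measure.map (X i) P = F) :
    (∀ (Ω' : Type) (m' : MeasurableSpace Ω') (Q : Measure Ω'), IsProbabilityMeasure Q →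
        ∀ Y : Fin n → Ω' → ℝ, (∀ i, Measurable (Y i)) →
        (∀ i, Measure.map (Y i) Q = F) →
        sSup (Set.range fun K : Finset (Fin n) => ∫ ω, (∑ i ∈ K, X i ω) ^ 2 ∂P) ≤
        sSup (Set.range fun K : Finset (Fin n) => ∫ ω', (∑ i ∈ K, Y i ω') ^ 2 ∂Q))
    ↔ ((∃ c : ℝ, ∀ᵐ ω ∂P, ∑ i, X i ω = c) ∧
        ∀ i j, i ≠ j → cov P (X i) (X j) = -(variance id F) / ((n : ℝ) - 1)) :=
  stmt12_general hn F hF2 hmean hCM P X hmX hmarg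
end

section
/- Let X_1, X_2, X_3 be random variables with zero means and finite variances whose sum is a.s. constant (hence 0). Then for every K ⊆ {1,2,3}, E[(∑_{i∈K} X_i)²] ≤ max(Var(X_1), Var(X_2), Var(X_3)); consequently any joint mix attains the minimum value max_i Var(X_i) of max_{K⊆[3]} E[(∑_{i∈K} X_i)²] over all couplings with the given marginals. -/
/-!
On a joint mix the centered variables sum to `0` almost surely, so the partial sum over `K`
is the negative of the partial sum over the complement of `K`, and both have the same second
moment. With three variables, one of `K` and its complement has at most one element, so that
second moment is `0` or a single variance. Conversely, singletons realise every variance.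
-/

open MeasureTheory ProbabilityTheory Finset

section ZeroSum

variable {Ω ι : Type*} [MeasurableSpace Ω] {P : Measure Ω} {X : ι → Ω → ℝ}

lemma ae_sum_eq_zero_of_integral_eq_zero [Fintype ι] [IsProbabilityMeasure P]
    (hint : ∀ i, Integrable (X i) P) (hmean : ∀ i, ∫ ω, X i ω ∂P = 0)
    (hc : ∃ c : ℝ, ∀ᵐ ω ∂P, ∑ i, X i ω = c) :
    ∀ᵐ ω ∂P, ∑ i, X i ω = 0 := by
  obtain ⟨c, hc⟩ := hc
  have hc_eq : c = 0 := by
    calc c = ∫ ω, ∑ i, X i ω ∂P := by rw [integral_congr_ae hc]; simp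
      _ = 0 := by simp [integral_finsetSum _ fun i _ => hint i, hmean]
  simpa [hc_eq] using hc

lemma integral_sq_sum_compl_eq [Fintype ι] [DecidableEq ι] (hsum : ∀ᵐ ω ∂P, ∑ i, X i ω = 0)
    (K : Finset ι) :
    ∫ ω, (∑ i ∈ Kᶜ, X i ω) ^ 2 ∂P = ∫ ω, (∑ i ∈ K, X i ω) ^ 2 ∂P := by
  refine integral_congr_ae ?_
  filter_upwards [hsum] with ω hω
  have hsplit := sum_add_sum_compl K fun i => X i ω
  rw [show ∑ i ∈ Kᶜ, X i ω = -∑ i ∈ K, X i ω by linarith, neg_sq]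

lemma integral_sq_sum_le_of_card_le_one {B : ℝ} (hB : 0 ≤ B)
    (hX : ∀ i, ∫ ω, X i ω ^ 2 ∂P ≤ B) {S : Finset ι} (hS : #S ≤ 1) :
    ∫ ω, (∑ i ∈ S, X i ω) ^ 2 ∂P ≤ B := by
  obtain hS | hS := Nat.le_one_iff_eq_zero_or_eq_one.mp hS
  · simpa [card_eq_zero.mp hS] using hB
  · obtain ⟨j, rfl⟩ := card_eq_one.mp hS
    simpa using hX j

theorem integral_sq_sum_le_of_card_le_three [Fintype ι] [DecidableEq ι]
    (hι : Fintype.card ι ≤ 3) (hsum : ∀ᵐ ω ∂P, ∑ i, X i ω = 0) {B : ℝ} (hB : 0 ≤ B)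
    (hX : ∀ i, ∫ ω, X i ω ^ 2 ∂P ≤ B) (K : Finset ι) :
    ∫ ω, (∑ i ∈ K, X i ω) ^ 2 ∂P ≤ B := by
  have hcard : #K ≤ 1 ∨ #Kᶜ ≤ 1 := by rw [card_compl]; omega
  rcases hcard with hK | hKc
  · exact integral_sq_sum_le_of_card_le_one hB hX hK
  · rw [← integral_sq_sum_compl_eq hsum]
    exact integral_sq_sum_le_of_card_le_one hB hX hKc

end ZeroSum

theorem stmt14_general {Ω : Type*} [MeasurableSpace Ω] (P : Measure Ω) [IsProbabilityMeasure P]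
    (X : Fin 3 → Ω → ℝ) (hL2 : ∀ i, MemLp (X i) 2 P)
    (hmean : ∀ i, ∫ ω, X i ω ∂P = 0)
    (hJM : ∃ c : ℝ, ∀ᵐ ω ∂P, ∑ i, X i ω = c) :
    (∀ K : Finset (Fin 3), ∫ ω, (∑ i ∈ K, X i ω) ^ 2 ∂P ≤
      max (variance (X 0) P) (max (variance (X 1) P) (variance (X 2) P))) ∧
    sSup (Set.range fun K : Finset (Fin 3) => ∫ ω, (∑ i ∈ K, X i ω) ^ 2 ∂P)
      = max (variance (X 0) P) (max (variance (X 1) P) (variance (X 2) P)) := by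
  set M := max (variance (X 0) P) (max (variance (X 1) P) (variance (X 2) P))
  have hvar i : variance (X i) P = ∫ ω, X i ω ^ 2 ∂P :=
    variance_of_integral_eq_zero (hL2 i).aestronglyMeasurable.aemeasurable (hmean i)
  have hle_M i : variance (X i) P ≤ M := by fin_cases i <;> simp [M]
  have hsum := ae_sum_eq_zero_of_integral_eq_zero (fun i => (hL2 i).integrable one_le_two)
    hmean hJM
  have hbound := integral_sq_sum_le_of_card_le_three (by simp) hsum
    ((variance_nonneg _ _).trans (hle_M 0)) fun i => hvar i ▸ hle_M i
  set S := Set.range fun K : Finset (Fin 3) => ∫ ω, (∑ i ∈ K, X i ω) ^ 2 ∂P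
  have hS_le_M : ∀ x ∈ S, x ≤ M := Set.forall_mem_range.mpr hbound
  have hvar_le_sSup i : variance (X i) P ≤ sSup S :=
    le_csSup ⟨M, hS_le_M⟩ ⟨{i}, by simp [hvar]⟩
  exact ⟨hbound, le_antisymm (csSup_le (Set.range_nonempty _) hS_le_M)
    (max_le (hvar_le_sSup 0) (max_le (hvar_le_sSup 1) (hvar_le_sSup 2)))⟩

/-- For a centered 3-dimensional joint mix, every partial sum has second moment bounded by
the maximal variance, and the maximum over all subsets equals the maximal variance
(the optimal value over all couplings with the given marginals). -/
theorem stmt14 {Ω : Type*} [MeasurableSpace Ω] (P : Measure Ω) [IsProbabilityMeasure P]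
    (X : Fin 3 → Ω → ℝ) (hmeas : ∀ i, Measurable (X i)) (hL2 : ∀ i, MemLp (X i) 2 P)
    (hmean : ∀ i, ∫ ω, X i ω ∂P = 0)
    (hJM : ∃ c : ℝ, ∀ᵐ ω ∂P, ∑ i, X i ω = c) :
    (∀ K : Finset (Fin 3), ∫ ω, (∑ i ∈ K, X i ω) ^ 2 ∂P ≤
      max (variance (X 0) P) (max (variance (X 1) P) (variance (X 2) P))) ∧
    sSup (Set.range fun K : Finset (Fin 3) => ∫ ω, (∑ i ∈ K, X i ω) ^ 2 ∂P)
      = max (variance (X 0) P) (max (variance (X 1) P) (variance (X 2) P)) :=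
  stmt14_general P X hL2 hmean hJM
end
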